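/- arXiv:2206.13149 — 8 statements merged into one kernel-verified Lean document; each statement's English description precedes it below -/
import Mathlib

section
/- Along the system, the squared modulus of C satisfies (d/dt)|C(t)|² = −(3/8 + c²/2)·B·|C(t)|²/(A(t)B − |C(t)|²) for all t ∈ [0,T); in particular t ↦ |C(t)|² is nonincreasing and |C(t)| ≤ |C(0)| for every t ∈ [0,T). -/
open Complex
open scoped ENNReal

/-!
Writing `C' = κ C` with `κ = -(3/16 + c²/4 + i c/4) B / (AB - |C|²)`, one gets
`(|C|²)' = 2 Re ⟨C, κ C⟩ = 2 (Re κ) |C|²`, and `Re κ = -(3/16 + c²/4) B / (AB - |C|²) ≤ 0`.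
The imaginary part of `κ` only rotates `C`, so `|C|²` is nonincreasing on the interval `[0, T)`.
-/

theorem Complex.inner_self_mul_right (w z : ℂ) : inner ℝ z (w * z) = w.re * ‖z‖ ^ 2 := by
  rw [Complex.inner, Complex.sq_norm, Complex.normSq_apply]
  simp only [mul_re, mul_im, conj_re, conj_im]
  ring

theorem HasDerivWithinAt.norm_sq_of_eq_mul {f : ℝ → ℂ} {κ : ℂ} {s : Set ℝ} {t : ℝ}
    (hf : HasDerivWithinAt f (κ * f t) s t) :
    HasDerivWithinAt (fun u => ‖f u‖ ^ 2) (2 * κ.re * ‖f t‖ ^ 2) s t := by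
  simpa only [Complex.inner_self_mul_right, mul_assoc] using hf.norm_sq

theorem antitoneOn_of_forall_hasDerivWithinAt_nonpos {D : Set ℝ} (hD : Convex ℝ D)
    {f f' : ℝ → ℝ} (hf : ∀ x ∈ D, HasDerivWithinAt f (f' x) D x)
    (hf'₀ : ∀ x ∈ D, f' x ≤ 0) : AntitoneOn f D :=
  antitoneOn_of_hasDerivWithinAt_nonpos hD (fun x hx => (hf x hx).continuousWithinAt)
    (fun x hx => (hf x (interior_subset hx)).mono interior_subset)
    (fun x hx => hf'₀ x (interior_subset hx))

theorem convex_setOf_nonneg_ofReal_lt (T : ℝ≥0∞) :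
    Convex ℝ {t : ℝ | 0 ≤ t ∧ ENNReal.ofReal t < T} :=
  (convex_Ici 0).inter <| Set.ordConnected_Iio.preimage_mono ENNReal.ofReal_mono |>.convex

theorem stmt_0_general (B c : ℝ) (hB : 0 < B) (T : ℝ≥0∞) (hT : 0 < T)
    (A : ℝ → ℝ) (C : ℝ → ℂ)
    (S : Set ℝ) (hSdef : S = {t : ℝ | 0 ≤ t ∧ ENNReal.ofReal t < T})
    (hpos : ∀ t ∈ S, 0 < A t * B - ‖C t‖ ^ 2)
    (hC : ∀ t ∈ S, HasDerivWithinAt C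
      (-(3 / 16 + (c : ℂ) ^ 2 / 4 + Complex.I * (c : ℂ) / 4) * (B : ℂ) * C t /
        ((A t * B - ‖C t‖ ^ 2 : ℝ) : ℂ)) S t) :
    (∀ t ∈ S, HasDerivWithinAt (fun u => ‖C u‖ ^ 2)
      (-(3 / 8 + c ^ 2 / 2) * B * ‖C t‖ ^ 2 /
        (A t * B - ‖C t‖ ^ 2)) S t) ∧
    (∀ t₁ ∈ S, ∀ t₂ ∈ S, t₁ ≤ t₂ → ‖C t₂‖ ^ 2 ≤ ‖C t₁‖ ^ 2) ∧
    (∀ t ∈ S, ‖C t‖ ≤ ‖C 0‖) := by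
  have hderiv : ∀ t ∈ S, HasDerivWithinAt (fun u => ‖C u‖ ^ 2)
      (-(3 / 8 + c ^ 2 / 2) * B * ‖C t‖ ^ 2 / (A t * B - ‖C t‖ ^ 2)) S t := by
    intro t ht
    set κ : ℂ := -(3 / 16 + (c : ℂ) ^ 2 / 4 + Complex.I * (c : ℂ) / 4) * (B : ℂ) /
      ((A t * B - ‖C t‖ ^ 2 : ℝ) : ℂ)
    have hκ : κ.re = -(3 / 16 + c ^ 2 / 4) * B / (A t * B - ‖C t‖ ^ 2) := by
      rw [div_ofReal_re]
      simp [← ofReal_pow]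
    have hCκ : HasDerivWithinAt C (κ * C t) S t := (hC t ht).congr_deriv (by ring)
    convert hCκ.norm_sq_of_eq_mul using 1
    rw [hκ]
    ring
  have hanti : AntitoneOn (fun u => ‖C u‖ ^ 2) S := by
    refine antitoneOn_of_forall_hasDerivWithinAt_nonpos (hSdef ▸ convex_setOf_nonneg_ofReal_lt T)
      hderiv fun t ht => div_nonpos_of_nonpos_of_nonneg ?_ (hpos t ht).le
    have : 0 ≤ (3 / 8 + c ^ 2 / 2) * B * ‖C t‖ ^ 2 := by positivity
    linarith [neg_mul (3 / 8 + c ^ 2 / 2) B]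
  have h0 : (0 : ℝ) ∈ S := by rw [hSdef]; exact ⟨le_rfl, by simpa using hT⟩
  refine ⟨hderiv, fun t₁ h₁ t₂ h₂ h12 => hanti h₁ h₂ h12, fun t ht => ?_⟩
  have ht₀ : 0 ≤ t := by rw [hSdef] at ht; exact ht.1
  exact pow_le_pow_iff_left₀ (norm_nonneg _) (norm_nonneg _) two_ne_zero |>.mp (hanti h0 ht ht₀)

/-- Along the pluriclosed-flow ODE system
`A′ = (3/4)(1 + |C|²/(AB − |C|²))`,
`C′ = −(3/16 + c²/4 + i·c/4)·B·C/(AB − |C|²)`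
on `[0,T)` (with `0 < T ≤ ∞`), the squared modulus of `C` satisfies
`(d/dt)|C(t)|² = −(3/8 + c²/2)·B·|C(t)|²/(A(t)B − |C(t)|²)`;
in particular `t ↦ |C(t)|²` is nonincreasing and `|C(t)| ≤ |C(0)|` on `[0,T)`. -/
theorem stmt_0 (B c : ℝ) (hB : 0 < B) (T : ℝ≥0∞) (hT : 0 < T)
    (A : ℝ → ℝ) (C : ℝ → ℂ)
    (S : Set ℝ) (hSdef : S = {t : ℝ | 0 ≤ t ∧ ENNReal.ofReal t < T})
    (hpos : ∀ t ∈ S, 0 < A t * B - ‖C t‖ ^ 2)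
    (hA : ∀ t ∈ S, HasDerivWithinAt A
      ((3 / 4) * (1 + ‖C t‖ ^ 2 / (A t * B - ‖C t‖ ^ 2))) S t)
    (hC : ∀ t ∈ S, HasDerivWithinAt C
      (-(3 / 16 + (c : ℂ) ^ 2 / 4 + Complex.I * (c : ℂ) / 4) * (B : ℂ) * C t /
        ((A t * B - ‖C t‖ ^ 2 : ℝ) : ℂ)) S t) :
    (∀ t ∈ S, HasDerivWithinAt (fun u => ‖C u‖ ^ 2)
      (-(3 / 8 + c ^ 2 / 2) * B * ‖C t‖ ^ 2 /
        (A t * B - ‖C t‖ ^ 2)) S t) ∧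
    (∀ t₁ ∈ S, ∀ t₂ ∈ S, t₁ ≤ t₂ → ‖C t₂‖ ^ 2 ≤ ‖C t₁‖ ^ 2) ∧
    (∀ t ∈ S, ‖C t‖ ≤ ‖C 0‖) :=
  stmt_0_general B c hB T hT A C S hSdef hpos hC
end

section
/- The function u(t) := A(t)B − |C(t)|² satisfies u′(t) = (3/4)·B + (9/8 + c²/2)·B·|C(t)|²/u(t) for all t ∈ [0,T); in particular u′(t) ≥ (3/4)B, u is nondecreasing, and u(t) ≥ u(0) + (3/4)·B·t for all t ∈ [0,T). -/
open Complex
open scoped ENNReal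

/-!
Since `C′ = k·C/u` with `Re k = −(3/16 + c²/4)·B`, the derivative of `|C|²` is
`2·Re(k)·|C|²/u`, and subtracting it from `A′B` gives the stated formula for `u′`, whose
second summand is nonnegative. The bound `u′ ≥ (3/4)B ≥ 0` then makes `u(t) − (3/4)Bt`
nondecreasing on the interval `[0,T)`.
-/

lemma Complex.real_inner_mul_self (z k : ℂ) : inner ℝ z (k * z) = k.re * ‖z‖ ^ 2 := by
  rw [Complex.inner, Complex.sq_norm, Complex.normSq_apply]
  simp only [mul_re, mul_im, conj_re, conj_im]
  ring

lemma HasDerivWithinAt.norm_sq_of_linear {f : ℝ → ℂ} {k : ℂ} {s : Set ℝ} {x : ℝ}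
    (hf : HasDerivWithinAt f (k * f x) s x) :
    HasDerivWithinAt (fun y => ‖f y‖ ^ 2) (2 * k.re * ‖f x‖ ^ 2) s x := by
  simpa only [Complex.real_inner_mul_self, mul_assoc] using hf.norm_sq

lemma Convex.add_mul_sub_le_of_le_hasDerivWithinAt {D : Set ℝ} (hD : Convex ℝ D)
    {f f' : ℝ → ℝ} {m : ℝ} (hf : ∀ x ∈ D, HasDerivWithinAt f (f' x) D x)
    (hm : ∀ x ∈ D, m ≤ f' x) ⦃x : ℝ⦄ (hx : x ∈ D) ⦃y : ℝ⦄ (hy : y ∈ D) (hxy : x ≤ y) :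
    f x + m * (y - x) ≤ f y := by
  have hg : ∀ z ∈ D, HasDerivWithinAt (fun t => f t - m * t) (f' z - m) D z := fun z hz =>
    (hf z hz).sub ((hasDerivWithinAt_id z D).const_mul m |>.congr_deriv (mul_one m))
  have hmono : MonotoneOn (fun t => f t - m * t) D :=
    monotoneOn_of_hasDerivWithinAt_nonneg hD (fun z hz => (hg z hz).continuousWithinAt)
      (fun z hz => (hg z (interior_subset hz)).mono interior_subset)
      (fun z hz => sub_nonneg.2 (hm z (interior_subset hz)))
  have := hmono hx hy hxy
  simp only at this
  linarith

lemma ordConnected_setOf_nonneg_ofReal_lt (T : ℝ≥0∞) :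
    Set.OrdConnected {t : ℝ | 0 ≤ t ∧ ENNReal.ofReal t < T} :=
  ⟨fun _ hx _ hz _ hy =>
    ⟨hx.1.trans hy.1, (ENNReal.ofReal_le_ofReal hy.2).trans_lt hz.2⟩⟩

/-- Along the pluriclosed-flow ODE system on `[0,T)`, the function
`u(t) := A(t)B − |C(t)|²` satisfies `u′(t) = (3/4)B + (9/8 + c²/2)·B·|C(t)|²/u(t)`;
in particular `u′(t) ≥ (3/4)B`, `u` is nondecreasing, and
`u(t) ≥ u(0) + (3/4)·B·t` on `[0,T)`. -/
theorem stmt_1 (B c : ℝ) (hB : 0 < B) (T : ℝ≥0∞) (hT : 0 < T)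
    (A : ℝ → ℝ) (C : ℝ → ℂ)
    (S : Set ℝ) (hSdef : S = {t : ℝ | 0 ≤ t ∧ ENNReal.ofReal t < T})
    (hpos : ∀ t ∈ S, 0 < A t * B - ‖C t‖ ^ 2)
    (hA : ∀ t ∈ S, HasDerivWithinAt A
      ((3 / 4) * (1 + ‖C t‖ ^ 2 / (A t * B - ‖C t‖ ^ 2))) S t)
    (hC : ∀ t ∈ S, HasDerivWithinAt C
      (-(3 / 16 + (c : ℂ) ^ 2 / 4 + Complex.I * (c : ℂ) / 4) * (B : ℂ) * C t /
        ((A t * B - ‖C t‖ ^ 2 : ℝ) : ℂ)) S t) :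
    (∀ t ∈ S, HasDerivWithinAt (fun u => A u * B - ‖C u‖ ^ 2)
      ((3 / 4) * B + (9 / 8 + c ^ 2 / 2) * B * ‖C t‖ ^ 2 /
        (A t * B - ‖C t‖ ^ 2)) S t) ∧
    (∀ t ∈ S, (3 / 4) * B ≤
      (3 / 4) * B + (9 / 8 + c ^ 2 / 2) * B * ‖C t‖ ^ 2 /
        (A t * B - ‖C t‖ ^ 2)) ∧
    (∀ t₁ ∈ S, ∀ t₂ ∈ S, t₁ ≤ t₂ →
      A t₁ * B - ‖C t₁‖ ^ 2 ≤ A t₂ * B - ‖C t₂‖ ^ 2) ∧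
    (∀ t ∈ S, A 0 * B - ‖C 0‖ ^ 2 + (3 / 4) * B * t ≤
      A t * B - ‖C t‖ ^ 2) := by
  have hderiv : ∀ t ∈ S, HasDerivWithinAt (fun u => A u * B - ‖C u‖ ^ 2)
      ((3 / 4) * B + (9 / 8 + c ^ 2 / 2) * B * ‖C t‖ ^ 2 /
        (A t * B - ‖C t‖ ^ 2)) S t := by
    intro t ht
    have hu : A t * B - ‖C t‖ ^ 2 ≠ 0 := (hpos t ht).ne'
    have hre : (-(3 / 16 + (c : ℂ) ^ 2 / 4 + Complex.I * (c : ℂ) / 4) * (B : ℂ)).re =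
        -(3 / 16 + c ^ 2 / 4) * B := by
      simp [← ofReal_pow]
    have hCk : HasDerivWithinAt C (-(3 / 16 + (c : ℂ) ^ 2 / 4 + Complex.I * (c : ℂ) / 4) *
        (B : ℂ) / ((A t * B - ‖C t‖ ^ 2 : ℝ) : ℂ) * C t) S t :=
      (hC t ht).congr_deriv (by ring)
    refine ((hA t ht).mul_const B |>.sub hCk.norm_sq_of_linear).congr_deriv ?_
    rw [div_ofReal_re, hre]
    field_simp
    ring
  have hge : ∀ t ∈ S, (3 / 4) * B ≤
      (3 / 4) * B + (9 / 8 + c ^ 2 / 2) * B * ‖C t‖ ^ 2 /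
        (A t * B - ‖C t‖ ^ 2) := fun t ht =>
    le_add_of_nonneg_right (div_nonneg (by positivity) (hpos t ht).le)
  have hS : Convex ℝ S := hSdef ▸ (ordConnected_setOf_nonneg_ofReal_lt T).convex
  have hgrowth := hS.add_mul_sub_le_of_le_hasDerivWithinAt hderiv hge
  have h0 : (0 : ℝ) ∈ S := by
    rw [hSdef]
    exact ⟨le_rfl, by simpa using hT⟩
  refine ⟨hderiv, hge, fun t₁ h₁ t₂ h₂ h₁₂ => ?_, fun t ht => ?_⟩
  · exact le_add_of_nonneg_right (mul_nonneg (by positivity) (sub_nonneg.2 h₁₂)) |>.trans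
      (hgrowth h₁ h₂ h₁₂)
  · simpa using hgrowth h0 ht (hSdef ▸ ht).1
end

section
/- For every A₀ ∈ ℝ and C₀ ∈ ℂ with A₀·B − |C₀|² > 0 there exists a unique pair of differentiable functions A : [0,∞) → ℝ and C : [0,∞) → ℂ with A(0) = A₀ and C(0) = C₀, satisfying A(t)·B − |C(t)|² > 0 for all t ≥ 0 and solving the ODE system on all of [0,∞). (The pluriclosed flow starting from a left-invariant pluriclosed metric on an Oeljeklaus-Toma manifold has a long-time solution.) -/
/-!
Along a solution, the intrinsic time `s(t) = log (A(t)/A₀) / (κB)` satisfies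
`ds/dt = 1/(AB - |C|²)`, and in the variable `s` the system becomes linear:
`A = A₀ e^{κBs}`, `C = C₀ e^{νs}`. Hence `AB - |C|² = A₀B e^{κBs} - |C₀|² e^{2 Re ν s}`
is at least its initial value `A₀B - |C₀|² > 0` for `s ≥ 0`, and `t` is recovered from `s`
as the integral of this gap, an increasing bijection `[0,∞) → [0,∞)`. Inverting it gives the
solution for all `t ≥ 0`, and any solution must have the same intrinsic time.
The theorem is the case `κ = 3/4`, `ν = -(3/16 + c²/4 + ic/4)B`.
-/

open Complex Filter Set

theorem exists_strictMono_hasDerivAt_leftInverse {f f' : ℝ → ℝ} {m : ℝ} (hm : 0 < m)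
    (hf : ∀ x, HasDerivAt f (f' x) x) (hf' : ∀ x, m ≤ f' x) :
    ∃ g : ℝ → ℝ, StrictMono g ∧ (∀ x, g (f x) = x) ∧ ∀ y, HasDerivAt g (f' (g y))⁻¹ y := by
  have hpos : ∀ x, 0 < f' x := fun x => hm.trans_le (hf' x)
  have hmono := strictMono_of_hasDerivAt_pos hf hpos
  have hlin : Monotone fun x => f x - m * x :=
    monotone_of_hasDerivAt_nonneg (fun x => (hf x).sub ((hasDerivAt_id x).const_mul m))
      fun x => by simpa using hf' x
  have htop : Tendsto f atTop atTop := by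
    refine tendsto_atTop_mono' _ ?_ (tendsto_atTop_add_const_left _ (f 0)
      (tendsto_id.const_mul_atTop hm))
    filter_upwards [eventually_ge_atTop 0] with x hx
    have := hlin hx
    simp only [mul_zero, sub_zero, id] at this ⊢
    linarith
  have hbot : Tendsto f atBot atBot := by
    refine tendsto_atBot_mono' _ ?_ (tendsto_atBot_add_const_left _ (f 0)
      (tendsto_id.const_mul_atBot hm))
    filter_upwards [eventually_le_atBot 0] with x hx
    have := hlin hx
    simp only [mul_zero, sub_zero, id] at this ⊢
    linarith
  have hcont : Continuous f := continuous_iff_continuousAt.2 fun x => (hf x).continuousAt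
  let e := hmono.orderIsoOfSurjective f (hcont.surjective htop hbot)
  refine ⟨e.symm, e.symm.strictMono, hmono.orderIsoOfSurjective_symm_apply_self f _, fun y => ?_⟩
  exact (hf _).of_local_left_inverse e.symm.continuous.continuousAt (hpos _).ne'
    (Eventually.of_forall e.apply_symm_apply)

theorem eq_of_hasDerivWithinAt_Ici_zero {E : Type*} [NormedAddCommGroup E] [NormedSpace ℝ E]
    {f : ℝ → E} (hf : ∀ t ∈ Ici (0 : ℝ), HasDerivWithinAt f 0 (Ici 0) t) {t : ℝ}
    (ht : t ∈ Ici (0 : ℝ)) : f t = f 0 :=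
  constant_of_has_deriv_right_zero
    (fun x hx => (hf x hx.1).continuousWithinAt.mono Icc_subset_Ici_self)
    (fun x hx => (hf x hx.1).mono (Ici_subset_Ici.2 hx.1)) t ⟨ht, le_rfl⟩

namespace PluriclosedFlow

def IsSolution (κ B : ℝ) (ν : ℂ) (A₀ : ℝ) (C₀ : ℂ) (A : ℝ → ℝ) (C : ℝ → ℂ) : Prop :=
  A 0 = A₀ ∧ C 0 = C₀ ∧
    (∀ t ∈ Ici (0 : ℝ), 0 < A t * B - ‖C t‖ ^ 2) ∧
    (∀ t ∈ Ici (0 : ℝ), HasDerivWithinAt A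
      (κ * (1 + ‖C t‖ ^ 2 / (A t * B - ‖C t‖ ^ 2))) (Ici 0) t) ∧
    (∀ t ∈ Ici (0 : ℝ), HasDerivWithinAt C
      (ν * C t / ((A t * B - ‖C t‖ ^ 2 : ℝ) : ℂ)) (Ici 0) t)

section Curve

variable (κ B : ℝ) (ν : ℂ) (A₀ : ℝ) (C₀ : ℂ)

noncomputable def curveA (s : ℝ) : ℝ := A₀ * Real.exp (κ * B * s)

noncomputable def curveC (s : ℝ) : ℂ := C₀ * cexp (ν * s)

noncomputable def gap (s : ℝ) : ℝ := curveA κ B A₀ s * B - ‖curveC ν C₀ s‖ ^ 2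

/-- Elapsed time as a function of intrinsic time. Capping the gap below by its initial value
changes nothing for `s ≥ 0` but makes `clock` an increasing bijection of all of `ℝ`. -/
noncomputable def clock (s : ℝ) : ℝ :=
  ∫ x in (0 : ℝ)..s, max (gap κ B ν A₀ C₀ x) (gap κ B ν A₀ C₀ 0)

variable {κ B ν A₀ C₀}

@[simp] lemma curveA_zero : curveA κ B A₀ 0 = A₀ := by simp [curveA]

@[simp] lemma curveC_zero : curveC ν C₀ 0 = C₀ := by simp [curveC]

lemma gap_zero : gap κ B ν A₀ C₀ 0 = A₀ * B - ‖C₀‖ ^ 2 := by simp [gap]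

@[simp] lemma clock_zero : clock κ B ν A₀ C₀ 0 = 0 := intervalIntegral.integral_same

lemma hasDerivAt_curveA (s : ℝ) : HasDerivAt (curveA κ B A₀) (κ * B * curveA κ B A₀ s) s := by
  refine (((hasDerivAt_id s).const_mul (κ * B)).exp.const_mul A₀).congr_deriv ?_
  simp only [curveA, id, mul_one]
  ring

lemma hasDerivAt_curveC (s : ℝ) : HasDerivAt (curveC ν C₀) (ν * curveC ν C₀ s) s := by
  refine (((hasDerivAt_id (s : ℂ)).const_mul ν).cexp.const_mul C₀).comp_ofReal.congr_deriv ?_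
  simp only [curveC, id, mul_one]
  ring

lemma norm_curveC_sq (s : ℝ) : ‖curveC ν C₀ s‖ ^ 2 = ‖C₀‖ ^ 2 * Real.exp (2 * ν.re * s) := by
  rw [curveC, norm_mul, mul_pow, Complex.norm_exp, ← Real.exp_nat_mul]
  simp only [mul_re, ofReal_re, ofReal_im, mul_zero, sub_zero, Nat.cast_ofNat]
  ring_nf

lemma continuous_gap : Continuous (gap κ B ν A₀ C₀) := by
  unfold gap curveA curveC
  fun_prop

lemma gap_zero_le (hκ : 0 ≤ κ) (hB : 0 ≤ B) (hν : ν.re ≤ 0) (hA₀ : 0 ≤ A₀) {s : ℝ}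
    (hs : 0 ≤ s) : gap κ B ν A₀ C₀ 0 ≤ gap κ B ν A₀ C₀ s := by
  have hgrow : 1 ≤ Real.exp (κ * B * s) := Real.one_le_exp (by positivity)
  have hdecay : Real.exp (2 * ν.re * s) ≤ 1 := Real.exp_le_one_iff.2 (by nlinarith)
  rw [gap_zero, gap, norm_curveC_sq, curveA]
  nlinarith [mul_nonneg hA₀ hB, sq_nonneg ‖C₀‖]

lemma hasDerivAt_clock (s : ℝ) :
    HasDerivAt (clock κ B ν A₀ C₀) (max (gap κ B ν A₀ C₀ s) (gap κ B ν A₀ C₀ 0)) s :=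
  (continuous_gap.max continuous_const).integral_hasStrictDerivAt 0 s |>.hasDerivAt

lemma strictMono_clock (hgap₀ : 0 < gap κ B ν A₀ C₀ 0) : StrictMono (clock κ B ν A₀ C₀) :=
  strictMono_of_hasDerivAt_pos hasDerivAt_clock fun _ => hgap₀.trans_le (le_max_right _ _)

lemma isSolution_curve_comp {σ : ℝ → ℝ} (hσ0 : σ 0 = 0)
    (hgap : ∀ t ∈ Ici (0 : ℝ), 0 < gap κ B ν A₀ C₀ (σ t))
    (hσ : ∀ t ∈ Ici (0 : ℝ), HasDerivWithinAt σ (gap κ B ν A₀ C₀ (σ t))⁻¹ (Ici 0) t) :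
    IsSolution κ B ν A₀ C₀ (fun t => curveA κ B A₀ (σ t)) (fun t => curveC ν C₀ (σ t)) := by
  refine ⟨by simp [hσ0], by simp [hσ0], hgap, fun t ht => ?_, fun t ht => ?_⟩
  · refine ((hasDerivAt_curveA (σ t)).comp_hasDerivWithinAt t (hσ t ht)).congr_deriv ?_
    have hne := (hgap t ht).ne'
    rw [gap] at hne
    beta_reduce
    rw [one_add_div hne, sub_add_cancel, gap]
    ring
  · refine ((hasDerivAt_curveC (σ t)).scomp_hasDerivWithinAt t (hσ t ht)).congr_deriv ?_
    rw [real_smul, ofReal_inv, div_eq_mul_inv, gap]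
    ring

theorem exists_isSolution (hκ : 0 ≤ κ) (hB : 0 < B) (hν : ν.re ≤ 0)
    (h₀ : 0 < A₀ * B - ‖C₀‖ ^ 2) : ∃ A C, IsSolution κ B ν A₀ C₀ A C := by
  have hA₀ : 0 ≤ A₀ := by nlinarith [sq_nonneg ‖C₀‖]
  have hgap₀ : 0 < gap κ B ν A₀ C₀ 0 := by rwa [gap_zero]
  obtain ⟨σ, hσ_mono, hσ_clock, hσ⟩ :=
    exists_strictMono_hasDerivAt_leftInverse hgap₀ hasDerivAt_clock fun _ => le_max_right _ _
  have hσ0 : σ 0 = 0 := by simpa using hσ_clock 0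
  have hgap_le : ∀ t ∈ Ici (0 : ℝ), gap κ B ν A₀ C₀ 0 ≤ gap κ B ν A₀ C₀ (σ t) :=
    fun t ht => gap_zero_le hκ hB.le hν hA₀ (hσ0 ▸ hσ_mono.monotone ht)
  refine ⟨_, _, isSolution_curve_comp hσ0 (fun t ht => hgap₀.trans_le (hgap_le t ht))
    fun t ht => ?_⟩
  simpa only [max_eq_left (hgap_le t ht)] using (hσ t).hasDerivWithinAt

end Curve

section Uniqueness

variable {κ B : ℝ} {ν : ℂ} {A₀ : ℝ} {C₀ : ℂ} {A : ℝ → ℝ} {C : ℝ → ℂ}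

noncomputable def logTime (κ B A₀ : ℝ) (A : ℝ → ℝ) (t : ℝ) : ℝ :=
  Real.log (A t / A₀) / (κ * B)

namespace IsSolution

variable (h : IsSolution κ B ν A₀ C₀ A C)
include h

lemma gap_pos {t : ℝ} (ht : t ∈ Ici (0 : ℝ)) : 0 < A t * B - ‖C t‖ ^ 2 := h.2.2.1 t ht

lemma hasDerivWithinAt_A {t : ℝ} (ht : t ∈ Ici (0 : ℝ)) :
    HasDerivWithinAt A (κ * (1 + ‖C t‖ ^ 2 / (A t * B - ‖C t‖ ^ 2))) (Ici 0) t :=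
  h.2.2.2.1 t ht

lemma hasDerivWithinAt_C {t : ℝ} (ht : t ∈ Ici (0 : ℝ)) :
    HasDerivWithinAt C (ν * C t / ((A t * B - ‖C t‖ ^ 2 : ℝ) : ℂ)) (Ici 0) t :=
  h.2.2.2.2 t ht

lemma apply_pos (hB : 0 < B) {t : ℝ} (ht : t ∈ Ici (0 : ℝ)) : 0 < A t := by
  have := h.gap_pos ht
  by_contra! hA
  nlinarith [sq_nonneg ‖C t‖]

lemma init_pos (hB : 0 < B) : 0 < A₀ := h.1 ▸ h.apply_pos hB self_mem_Ici

lemma init_le_apply (hκ : 0 ≤ κ) {t : ℝ} (ht : t ∈ Ici (0 : ℝ)) : A₀ ≤ A t := by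
  refine h.1 ▸ monotoneOn_of_hasDerivWithinAt_nonneg (convex_Ici 0)
    (f' := fun x => κ * (1 + ‖C x‖ ^ 2 / (A x * B - ‖C x‖ ^ 2)))
    (fun x hx => (h.hasDerivWithinAt_A hx).continuousWithinAt) (fun x hx => ?_) (fun x hx => ?_)
    self_mem_Ici ht ht
  · rw [interior_Ici] at hx ⊢
    exact (h.hasDerivWithinAt_A (mem_Ici_of_Ioi hx)).mono Ioi_subset_Ici_self
  · rw [interior_Ici] at hx
    have := h.gap_pos (mem_Ici_of_Ioi hx)
    positivity

lemma logTime_zero : logTime κ B A₀ A 0 = 0 := by simp [logTime, h.1]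

lemma logTime_nonneg (hκ : 0 < κ) (hB : 0 < B) {t : ℝ} (ht : t ∈ Ici (0 : ℝ)) :
    0 ≤ logTime κ B A₀ A t :=
  div_nonneg (Real.log_nonneg ((one_le_div (h.init_pos hB)).2 (h.init_le_apply hκ.le ht)))
    (by positivity)

lemma hasDerivWithinAt_logTime (hκ : 0 < κ) (hB : 0 < B) {t : ℝ} (ht : t ∈ Ici (0 : ℝ)) :
    HasDerivWithinAt (logTime κ B A₀ A) (A t * B - ‖C t‖ ^ 2)⁻¹ (Ici 0) t := by
  have hA₀ := h.init_pos hB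
  have hAt := h.apply_pos hB ht
  refine (((h.hasDerivWithinAt_A ht).div_const A₀).log (by positivity)).div_const (κ * B)
    |>.congr_deriv ?_
  rw [one_add_div (h.gap_pos ht).ne', sub_add_cancel]
  field_simp

lemma eq_curveA_logTime (hκ : 0 < κ) (hB : 0 < B) {t : ℝ} (ht : t ∈ Ici (0 : ℝ)) :
    A t = curveA κ B A₀ (logTime κ B A₀ A t) := by
  have hA₀ := h.init_pos hB
  rw [curveA, logTime, mul_div_cancel₀ _ (by positivity),
    Real.exp_log (div_pos (h.apply_pos hB ht) hA₀), mul_div_cancel₀ _ hA₀.ne']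

lemma eq_curveC_logTime (hκ : 0 < κ) (hB : 0 < B) {t : ℝ} (ht : t ∈ Ici (0 : ℝ)) :
    C t = curveC ν C₀ (logTime κ B A₀ A t) := by
  have hconst := eq_of_hasDerivWithinAt_Ici_zero
    (f := fun t => C t * cexp (-ν * logTime κ B A₀ A t)) (fun x hx => ?_) ht
  · simp only [h.logTime_zero, h.2.1, ofReal_zero, mul_zero, Complex.exp_zero, mul_one]
      at hconst
    rw [curveC, ← hconst, neg_mul, Complex.exp_neg, mul_assoc,
      inv_mul_cancel₀ (Complex.exp_ne_zero _), mul_one]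
  · have hexp := (((hasDerivAt_id _).const_mul (-ν)).cexp.comp_ofReal).scomp_hasDerivWithinAt x
      (h.hasDerivWithinAt_logTime hκ hB hx)
    refine ((h.hasDerivWithinAt_C hx).mul hexp).congr_deriv ?_
    simp only [id, mul_one, real_smul, ofReal_inv, Function.comp_apply]
    ring

lemma gap_logTime (hκ : 0 < κ) (hB : 0 < B) {t : ℝ} (ht : t ∈ Ici (0 : ℝ)) :
    gap κ B ν A₀ C₀ (logTime κ B A₀ A t) = A t * B - ‖C t‖ ^ 2 := by
  rw [gap, ← h.eq_curveA_logTime hκ hB ht, ← h.eq_curveC_logTime hκ hB ht]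

lemma clock_logTime (hκ : 0 < κ) (hB : 0 < B) (hν : ν.re ≤ 0) {t : ℝ}
    (ht : t ∈ Ici (0 : ℝ)) : clock κ B ν A₀ C₀ (logTime κ B A₀ A t) = t := by
  have hconst := eq_of_hasDerivWithinAt_Ici_zero
    (f := fun t => clock κ B ν A₀ C₀ (logTime κ B A₀ A t) - t) (fun x hx => ?_) ht
  · simpa [h.logTime_zero, sub_eq_zero] using hconst
  · refine (((hasDerivAt_clock _).comp_hasDerivWithinAt x
      (h.hasDerivWithinAt_logTime hκ hB hx)).sub (hasDerivWithinAt_id x _)).congr_deriv ?_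
    rw [max_eq_left (gap_zero_le hκ.le hB.le hν (h.init_pos hB).le
        (h.logTime_nonneg hκ hB hx)), h.gap_logTime hκ hB hx,
      mul_inv_cancel₀ (h.gap_pos hx).ne', sub_self]

theorem unique {A' : ℝ → ℝ} {C' : ℝ → ℂ} (hκ : 0 < κ) (hB : 0 < B) (hν : ν.re ≤ 0)
    (h' : IsSolution κ B ν A₀ C₀ A' C') {t : ℝ} (ht : t ∈ Ici (0 : ℝ)) :
    A t = A' t ∧ C t = C' t := by
  have hgap₀ : 0 < gap κ B ν A₀ C₀ 0 := by
    rw [gap_zero, ← h.1, ← h.2.1]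
    exact h.gap_pos self_mem_Ici
  have hs : logTime κ B A₀ A t = logTime κ B A₀ A' t :=
    (strictMono_clock hgap₀).injective <|
      (h.clock_logTime hκ hB hν ht).trans (h'.clock_logTime hκ hB hν ht).symm
  rw [h.eq_curveA_logTime hκ hB ht, h.eq_curveC_logTime hκ hB ht,
    h'.eq_curveA_logTime hκ hB ht, h'.eq_curveC_logTime hκ hB ht, hs]
  exact ⟨rfl, rfl⟩

end IsSolution

end Uniqueness

end PluriclosedFlow

/-- For every initial datum `A₀ ∈ ℝ`, `C₀ ∈ ℂ` with `A₀B − |C₀|² > 0`, the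
pluriclosed-flow ODE system has a unique solution `(A, C)` on all of `[0,∞)` with
`A(0) = A₀`, `C(0) = C₀` and `A(t)B − |C(t)|² > 0` for all `t ≥ 0`
(long-time existence of the pluriclosed flow on Oeljeklaus-Toma manifolds). -/
theorem stmt_3 (B c : ℝ) (hB : 0 < B) (A₀ : ℝ) (C₀ : ℂ)
    (h₀ : 0 < A₀ * B - ‖C₀‖ ^ 2) :
    ∃ A : ℝ → ℝ, ∃ C : ℝ → ℂ,
      (A 0 = A₀ ∧ C 0 = C₀ ∧
        (∀ t ∈ Set.Ici (0 : ℝ), 0 < A t * B - ‖C t‖ ^ 2) ∧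
        (∀ t ∈ Set.Ici (0 : ℝ), HasDerivWithinAt A
          ((3 / 4) * (1 + ‖C t‖ ^ 2 / (A t * B - ‖C t‖ ^ 2)))
          (Set.Ici 0) t) ∧
        (∀ t ∈ Set.Ici (0 : ℝ), HasDerivWithinAt C
          (-(3 / 16 + (c : ℂ) ^ 2 / 4 + Complex.I * (c : ℂ) / 4) * (B : ℂ) * C t /
            ((A t * B - ‖C t‖ ^ 2 : ℝ) : ℂ)) (Set.Ici 0) t)) ∧
      (∀ A' : ℝ → ℝ, ∀ C' : ℝ → ℂ,
        (A' 0 = A₀ ∧ C' 0 = C₀ ∧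
          (∀ t ∈ Set.Ici (0 : ℝ), 0 < A' t * B - ‖C' t‖ ^ 2) ∧
          (∀ t ∈ Set.Ici (0 : ℝ), HasDerivWithinAt A'
            ((3 / 4) * (1 + ‖C' t‖ ^ 2 / (A' t * B - ‖C' t‖ ^ 2)))
            (Set.Ici 0) t) ∧
          (∀ t ∈ Set.Ici (0 : ℝ), HasDerivWithinAt C'
            (-(3 / 16 + (c : ℂ) ^ 2 / 4 + Complex.I * (c : ℂ) / 4) * (B : ℂ) * C' t /
              ((A' t * B - ‖C' t‖ ^ 2 : ℝ) : ℂ)) (Set.Ici 0) t)) →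
        ∀ t ∈ Set.Ici (0 : ℝ), A' t = A t ∧ C' t = C t) := by
  have hν : (-(3 / 16 + (c : ℂ) ^ 2 / 4 + Complex.I * (c : ℂ) / 4) * (B : ℂ)).re ≤ 0 := by
    simp [← ofReal_pow]
    nlinarith [sq_nonneg c]
  obtain ⟨A, C, hAC⟩ := PluriclosedFlow.exists_isSolution (κ := 3 / 4) (by norm_num) hB hν h₀
  exact ⟨A, C, hAC, fun A' C' h' t ht =>
    PluriclosedFlow.IsSolution.unique h' (by norm_num) hB hν hAC ht⟩
end

section
/- If the solution is defined on all of [0,∞) (i.e. T = ∞), then |C(t)|²/(A(t)B − |C(t)|²) → 0 as t → ∞. -/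
open Complex Filter Set

/-!
Along the flow `|C|²` is nonincreasing: for `C' = k C` one has `(|C|²)' = 2 Re(k) |C|²`, and here
`Re k = -(3/16 + c²/4) B / (AB - |C|²) ≤ 0`. Meanwhile `A' ≥ 3/4`, so `A` grows at least linearly.
Hence `AB - |C|² ≥ (A(0) + 3t/4) B - |C(0)|² → ∞` while the numerator stays below `|C(0)|²`.
-/

lemma monotoneOn_Ici_of_hasDerivWithinAt_nonneg {f f' : ℝ → ℝ} {a : ℝ}
    (hf : ∀ t ∈ Ici a, HasDerivWithinAt f (f' t) (Ici a) t) (hf' : ∀ t ∈ Ioi a, 0 ≤ f' t) :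
    MonotoneOn f (Ici a) :=
  monotoneOn_of_hasDerivWithinAt_nonneg (convex_Ici a) (fun t ht ↦ (hf t ht).continuousWithinAt)
    (by simpa using fun t ht ↦ (hf t (Ioi_subset_Ici_self ht)).mono Ioi_subset_Ici_self)
    (by simpa using hf')

lemma antitoneOn_Ici_of_hasDerivWithinAt_nonpos {f f' : ℝ → ℝ} {a : ℝ}
    (hf : ∀ t ∈ Ici a, HasDerivWithinAt f (f' t) (Ici a) t) (hf' : ∀ t ∈ Ioi a, f' t ≤ 0) :
    AntitoneOn f (Ici a) :=
  antitoneOn_of_hasDerivWithinAt_nonpos (convex_Ici a) (fun t ht ↦ (hf t ht).continuousWithinAt)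
    (by simpa using fun t ht ↦ (hf t (Ioi_subset_Ici_self ht)).mono Ioi_subset_Ici_self)
    (by simpa using hf')

lemma add_mul_sub_le_of_le_hasDerivWithinAt_Ici {f f' : ℝ → ℝ} {a m : ℝ}
    (hf : ∀ t ∈ Ici a, HasDerivWithinAt f (f' t) (Ici a) t) (hm : ∀ t ∈ Ioi a, m ≤ f' t)
    {t : ℝ} (ht : a ≤ t) : f a + m * (t - a) ≤ f t := by
  have hmono : MonotoneOn (fun s ↦ f s - m * s) (Ici a) :=
    monotoneOn_Ici_of_hasDerivWithinAt_nonneg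
      (fun s hs ↦ by simpa using (hf s hs).fun_sub ((hasDerivWithinAt_id s _).const_mul m))
      (fun s hs ↦ sub_nonneg.mpr (hm s hs))
  linarith [hmono self_mem_Ici ht ht]

lemma hasDerivWithinAt_norm_sq_of_mul {C : ℝ → ℂ} {k : ℂ} {s : Set ℝ} {t : ℝ}
    (hC : HasDerivWithinAt C (k * C t) s t) :
    HasDerivWithinAt (‖C ·‖ ^ 2) (2 * k.re * ‖C t‖ ^ 2) s t := by
  convert hC.norm_sq using 1
  rw [Complex.inner, mul_assoc k, mul_conj', ← ofReal_pow, re_mul_ofReal]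
  ring

lemma antitoneOn_norm_sq_of_hasDerivWithinAt_mul {C : ℝ → ℂ} {k : ℝ → ℂ} {a : ℝ}
    (hC : ∀ t ∈ Ici a, HasDerivWithinAt C (k t * C t) (Ici a) t)
    (hk : ∀ t ∈ Ioi a, (k t).re ≤ 0) :
    AntitoneOn (‖C ·‖ ^ 2) (Ici a) :=
  antitoneOn_Ici_of_hasDerivWithinAt_nonpos (fun t ht ↦ hasDerivWithinAt_norm_sq_of_mul (hC t ht))
    fun t ht ↦ mul_nonpos_of_nonpos_of_nonneg (by linarith [hk t ht]) (sq_nonneg _)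

/-- If the solution of the pluriclosed-flow ODE system is defined on all of
`[0,∞)` (i.e. `T = ∞`), then `|C(t)|²/(A(t)B − |C(t)|²) → 0` as `t → ∞`. -/
theorem stmt_4 (B c : ℝ) (hB : 0 < B)
    (A : ℝ → ℝ) (C : ℝ → ℂ)
    (hpos : ∀ t ∈ Set.Ici (0 : ℝ), 0 < A t * B - ‖C t‖ ^ 2)
    (hA : ∀ t ∈ Set.Ici (0 : ℝ), HasDerivWithinAt A
      ((3 / 4) * (1 + ‖C t‖ ^ 2 / (A t * B - ‖C t‖ ^ 2)))
      (Set.Ici 0) t)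
    (hC : ∀ t ∈ Set.Ici (0 : ℝ), HasDerivWithinAt C
      (-(3 / 16 + (c : ℂ) ^ 2 / 4 + Complex.I * (c : ℂ) / 4) * (B : ℂ) * C t /
        ((A t * B - ‖C t‖ ^ 2 : ℝ) : ℂ)) (Set.Ici 0) t) :
    Tendsto (fun t => ‖C t‖ ^ 2 / (A t * B - ‖C t‖ ^ 2))
      atTop (nhds 0) := by
  have hC_anti : AntitoneOn (‖C ·‖ ^ 2) (Ici 0) := by
    refine antitoneOn_norm_sq_of_hasDerivWithinAt_mul
      (k := fun t ↦ -(3 / 16 + (c : ℂ) ^ 2 / 4 + I * c / 4) * B / ((A t * B - ‖C t‖ ^ 2 : ℝ) : ℂ))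
      (fun t ht ↦ ?_) fun t ht ↦ ?_
    · convert hC t ht using 1; ring
    · have hre : (-(3 / 16 + (c : ℂ) ^ 2 / 4 + I * c / 4)).re = -(3 / 16 + c ^ 2 / 4) := by
        simp [sq]
      rw [div_ofReal_re, re_mul_ofReal, hre]
      exact div_nonpos_of_nonpos_of_nonneg (by nlinarith [sq_nonneg c])
        (hpos t (Ioi_subset_Ici_self ht)).le
  have hA_ge : ∀ t ≥ 0, A 0 + 3 / 4 * t ≤ A t := fun t ht ↦ by
    simpa using add_mul_sub_le_of_le_hasDerivWithinAt_Ici hA (fun s hs ↦ by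
      have := div_nonneg (sq_nonneg ‖C s‖) (hpos s (Ioi_subset_Ici_self hs)).le
      linarith) ht
  have hD_ge : ∀ t ≥ 0, (A 0 + 3 / 4 * t) * B - ‖C 0‖ ^ 2 ≤ A t * B - ‖C t‖ ^ 2 := fun t ht ↦ by
    nlinarith [hA_ge t ht, hC_anti self_mem_Ici ht ht]
  have hD_top : Tendsto (fun t ↦ A t * B - ‖C t‖ ^ 2) atTop atTop := by
    refine tendsto_atTop_mono' _ ((eventually_ge_atTop 0).mono hD_ge) ?_
    have hlin : Tendsto (fun t : ℝ ↦ A 0 + 3 / 4 * t) atTop atTop :=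
      tendsto_atTop_add_const_left _ _ (tendsto_id.const_mul_atTop (by norm_num))
    simpa only [sub_eq_add_neg] using
      tendsto_atTop_add_const_right _ (-‖C 0‖ ^ 2) (hlin.atTop_mul_const hB)
  refine squeeze_zero' ?_ ?_ ((tendsto_const_nhds (x := ‖C 0‖ ^ 2)).div_atTop hD_top)
  · filter_upwards [eventually_ge_atTop 0] with t ht
    exact div_nonneg (sq_nonneg _) (hpos t ht).le
  · filter_upwards [eventually_ge_atTop 0] with t ht
    exact div_le_div_of_nonneg_right (hC_anti self_mem_Ici ht ht) (hpos t ht).le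
end

section
/- Assume λ_{ki} ≠ √−1/2 for all k, i. Then every ℂ-linear derivation D of 𝔤 with D(𝔤^{1,0}) ⊆ 𝔤^{1,0} and D(𝔤^{0,1}) ⊆ 𝔤^{0,1} vanishes on 𝔥, i.e. D Z_k = 0 and D Z̄_k = 0 for every k = 1, …, r. -/
/-!
Fix `k` and put `x = D Z_k ∈ 𝔤^{1,0}`, `y = D Z̄_k ∈ 𝔤^{0,1}`. Applying `D` to
`[Z_k, Z̄_k] = -(i/2)(Z_k + Z̄_k)` gives `T_k (x + y) = 0` for the operator
`T_k v = [v^{1,0}, Z̄_k] + [Z_k, v^{0,1}] + (i/2) v`. In the basis `T_k` is monomial: it sends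
`Z_k ↦ -(i/2) Z̄_k`, `Z̄_k ↦ -(i/2) Z_k`, `Z_l ↦ (i/2) Z_l` and `Z̄_l ↦ (i/2) Z̄_l` for `l ≠ k`,
`W_i ↦ (i/2 - λ_{ki}) W_i` and `W̄_i ↦ conj (λ_{ki} - i/2) W̄_i`. These coefficients are nonzero
because `λ_{ki} ≠ i/2`, so `T_k` is injective. Hence `x + y = 0`, and `x = y = 0` because
`𝔤^{1,0} ∩ 𝔤^{0,1} = 0`.
-/

open Complex ComplexConjugate Submodule Module

theorem Module.Basis.injective_constr_smul_comp {ι K V : Type*} [Field K] [AddCommGroup V]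
    [Module K V] (b : Basis ι K V) {u : ι → K} (hu : ∀ j, u j ≠ 0) {σ : ι → ι}
    (hσ : Function.Injective σ) : Function.Injective (b.constr K fun j => u j • b (σ j)) :=
  b.injective_constr_of_linearIndependent <|
    (b.linearIndependent.comp σ hσ).units_smul fun j => Units.mk0 (u j) (hu j)

namespace OeljeklausToma

abbrev Index (r s : ℕ) : Type := (Fin r ⊕ Fin r) ⊕ (Fin s ⊕ Fin s)

variable {r s : ℕ} {L : Type*} [LieRing L] [LieAlgebra ℂ L]

noncomputable def twistCoeff (lam : Fin r → Fin s → ℂ) (k : Fin r) : Index r s → ℂ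
  | .inl (.inl l) | .inl (.inr l) => if l = k then -(I / 2) else I / 2
  | .inr (.inl i) => -(lam k i - I / 2)
  | .inr (.inr i) => conj (lam k i - I / 2)

theorem twistCoeff_ne_zero {lam : Fin r → Fin s → ℂ} (hlam : ∀ k i, lam k i ≠ I / 2)
    (k : Fin r) : ∀ j, twistCoeff lam k j ≠ 0
  | .inl (.inl l) | .inl (.inr l) => by dsimp only [twistCoeff]; split_ifs <;> simp [I_ne_zero]
  | .inr (.inl i) => neg_ne_zero.2 (sub_ne_zero.2 (hlam k i))
  | .inr (.inr i) => (map_ne_zero _).2 (sub_ne_zero.2 (hlam k i))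

-- The operator `T_k` above, defined through its monomial matrix.
noncomputable def twist (bas : Basis (Index r s) ℂ L)
    (lam : Fin r → Fin s → ℂ) (k : Fin r) : L →ₗ[ℂ] L :=
  bas.constr ℂ fun j => twistCoeff lam k j • bas (Equiv.swap (.inl (.inl k)) (.inl (.inr k)) j)

theorem twist_injective {bas : Basis (Index r s) ℂ L}
    {lam : Fin r → Fin s → ℂ} (hlam : ∀ k i, lam k i ≠ I / 2) (k : Fin r) :
    Function.Injective (twist bas lam k) :=
  bas.injective_constr_smul_comp (twistCoeff_ne_zero hlam k) (Equiv.injective _)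

theorem twist_apply_basis (bas : Basis (Index r s) ℂ L)
    (lam : Fin r → Fin s → ℂ) (k : Fin r) (j : Index r s) :
    twist bas lam k (bas j) =
      twistCoeff lam k j • bas (Equiv.swap (.inl (.inl k)) (.inl (.inr k)) j) :=
  bas.constr_basis ℂ _ j

variable {bas : Basis (Index r s) ℂ L} {lam : Fin r → Fin s → ℂ}
  {Z Zb : Fin r → L} {W Wb : Fin s → L}

theorem twist_eq_of_mem_span_Z_W (hbas : ⇑bas = Sum.elim (Sum.elim Z Zb) (Sum.elim W Wb))
    (hZZb : ∀ k l, ⁅Z k, Zb l⁆ = if k = l then (-(I / 2)) • (Z k + Zb k) else 0)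
    (hZbW : ∀ k i, ⁅Zb k, W i⁆ = (lam k i) • W i) (k : Fin r) {x : L}
    (hx : x ∈ span ℂ (Set.range Z ∪ Set.range W)) :
    twist bas lam k x = ⁅x, Zb k⁆ + (I / 2) • x := by
  induction hx using Submodule.span_induction with
  | mem v hv =>
    rcases hv with ⟨l, rfl⟩ | ⟨i, rfl⟩
    · obtain rfl | hlk := eq_or_ne l k
      · have h := twist_apply_basis bas lam l (.inl (.inl l))
        simp only [twistCoeff, if_pos, Equiv.swap_apply_left, hbas, Sum.elim_inl, Sum.elim_inr] at h
        rw [h, hZZb, if_pos rfl]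
        module
      · have h := twist_apply_basis bas lam k (.inl (.inl l))
        rw [Equiv.swap_apply_of_ne_of_ne (by simpa using hlk) (by simp)] at h
        simp only [twistCoeff, if_neg hlk, hbas, Sum.elim_inl] at h
        rw [h, hZZb, if_neg hlk, zero_add]
    · have h := twist_apply_basis bas lam k (.inr (.inl i))
      rw [Equiv.swap_apply_of_ne_of_ne (by simp) (by simp)] at h
      simp only [twistCoeff, hbas, Sum.elim_inl, Sum.elim_inr] at h
      rw [h, ← lie_skew, hZbW]
      module
  | zero => simp
  | add v w _ _ hv hw => rw [map_add, hv, hw, add_lie, smul_add]; abel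
  | smul c v _ hv => rw [map_smul, hv, smul_lie, smul_add, smul_comm]

theorem twist_eq_of_mem_span_Zb_Wb (hbas : ⇑bas = Sum.elim (Sum.elim Z Zb) (Sum.elim W Wb))
    (hZZb : ∀ k l, ⁅Z k, Zb l⁆ = if k = l then (-(I / 2)) • (Z k + Zb k) else 0)
    (hZWb : ∀ k i, ⁅Z k, Wb i⁆ = (starRingEnd ℂ (lam k i)) • Wb i) (k : Fin r) {x : L}
    (hx : x ∈ span ℂ (Set.range Zb ∪ Set.range Wb)) :
    twist bas lam k x = ⁅Z k, x⁆ + (I / 2) • x := by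
  induction hx using Submodule.span_induction with
  | mem v hv =>
    rcases hv with ⟨l, rfl⟩ | ⟨i, rfl⟩
    · obtain rfl | hlk := eq_or_ne l k
      · have h := twist_apply_basis bas lam l (.inl (.inr l))
        simp only [twistCoeff, if_pos, Equiv.swap_apply_right, hbas, Sum.elim_inl,
          Sum.elim_inr] at h
        rw [h, hZZb, if_pos rfl]
        module
      · have h := twist_apply_basis bas lam k (.inl (.inr l))
        rw [Equiv.swap_apply_of_ne_of_ne (by simp) (by simpa using hlk)] at h
        simp only [twistCoeff, if_neg hlk, hbas, Sum.elim_inl, Sum.elim_inr] at h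
        rw [h, hZZb, if_neg hlk.symm, zero_add]
    · have h := twist_apply_basis bas lam k (.inr (.inr i))
      rw [Equiv.swap_apply_of_ne_of_ne (by simp) (by simp)] at h
      simp only [twistCoeff, hbas, Sum.elim_inr, map_sub, map_div₀, conj_I, map_ofNat] at h
      rw [h, hZWb]
      module
  | zero => simp
  | add v w _ _ hv hw => rw [map_add, hv, hw, lie_add, smul_add]; abel
  | smul c v _ hv => rw [map_smul, hv, lie_smul, smul_add, smul_comm]

theorem disjoint_span_Z_W_span_Zb_Wb
    (hli : LinearIndependent ℂ (Sum.elim (Sum.elim Z Zb) (Sum.elim W Wb))) :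
    Disjoint (span ℂ (Set.range Z ∪ Set.range W)) (span ℂ (Set.range Zb ∪ Set.range Wb)) := by
  have h10 : Set.range Z ∪ Set.range W = Sum.elim (Sum.elim Z Zb) (Sum.elim W Wb) ''
      (Set.range (Sum.inl ∘ Sum.inl) ∪ Set.range (Sum.inr ∘ Sum.inl)) := by
    rw [Set.image_union, ← Set.range_comp, ← Set.range_comp]; rfl
  have h01 : Set.range Zb ∪ Set.range Wb = Sum.elim (Sum.elim Z Zb) (Sum.elim W Wb) ''
      (Set.range (Sum.inl ∘ Sum.inr) ∪ Set.range (Sum.inr ∘ Sum.inr)) := by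
    rw [Set.image_union, ← Set.range_comp, ← Set.range_comp]; rfl
  rw [h10, h01]
  refine hli.disjoint_span_image (Set.disjoint_left.2 ?_)
  rintro _ (⟨l, rfl⟩ | ⟨i, rfl⟩) (⟨_, h⟩ | ⟨_, h⟩) <;> simp at h

end OeljeklausToma

open OeljeklausToma

theorem stmt_7_general (r s : ℕ)
    (lam : Fin r → Fin s → ℂ) (hlam : ∀ k i, lam k i ≠ I / 2)
    (L : Type*) [LieRing L] [LieAlgebra ℂ L]
    (bas : Module.Basis ((Fin r ⊕ Fin r) ⊕ (Fin s ⊕ Fin s)) ℂ L)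
    (Z Zb : Fin r → L) (W Wb : Fin s → L)
    (hZ : ∀ k, Z k = bas (Sum.inl (Sum.inl k)))
    (hZb : ∀ k, Zb k = bas (Sum.inl (Sum.inr k)))
    (hW : ∀ i, W i = bas (Sum.inr (Sum.inl i)))
    (hWb : ∀ i, Wb i = bas (Sum.inr (Sum.inr i)))
    (hZZb : ∀ k l, ⁅Z k, Zb l⁆ = if k = l then (-(I / 2)) • (Z k + Zb k) else 0)
    (hZWb : ∀ k i, ⁅Z k, Wb i⁆ = (starRingEnd ℂ (lam k i)) • Wb i)
    (hZbW : ∀ k i, ⁅Zb k, W i⁆ = (lam k i) • W i)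
    (D : L →ₗ[ℂ] L)
    (hDer : ∀ x y : L, D ⁅x, y⁆ = ⁅D x, y⁆ + ⁅x, D y⁆)
    (hD10 : ∀ x ∈ Submodule.span ℂ (Set.range Z ∪ Set.range W),
      D x ∈ Submodule.span ℂ (Set.range Z ∪ Set.range W))
    (hD01 : ∀ x ∈ Submodule.span ℂ (Set.range Zb ∪ Set.range Wb),
      D x ∈ Submodule.span ℂ (Set.range Zb ∪ Set.range Wb)) :
    ∀ k, D (Z k) = 0 ∧ D (Zb k) = 0 := by
  intro k
  have hbas : ⇑bas = Sum.elim (Sum.elim Z Zb) (Sum.elim W Wb) := by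
    ext ((l | l) | (i | i)) <;> simp [hZ, hZb, hW, hWb]
  have hx := hD10 _ (subset_span (.inl ⟨k, rfl⟩))
  have hy := hD01 _ (subset_span (.inl ⟨k, rfl⟩))
  have hder : ⁅D (Z k), Zb k⁆ + ⁅Z k, D (Zb k)⁆ = -(I / 2) • (D (Z k) + D (Zb k)) := by
    rw [← hDer, hZZb, if_pos rfl, map_smul, map_add]
  have hsum : D (Z k) + D (Zb k) = 0 := by
    refine twist_injective (bas := bas) hlam k ?_
    rw [map_add, twist_eq_of_mem_span_Z_W hbas hZZb hZbW k hx,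
      twist_eq_of_mem_span_Zb_Wb hbas hZZb hZWb k hy, map_zero]
    linear_combination (norm := module) hder
  have hx0 : D (Z k) = 0 :=
    disjoint_def.1 (disjoint_span_Z_W_span_Zb_Wb (hbas ▸ bas.linearIndependent)) _ hx
      (eq_neg_of_add_eq_zero_left hsum ▸ neg_mem hy)
  exact ⟨hx0, by rwa [hx0, zero_add] at hsum⟩

/-- Let `𝔤` be the complexified Lie algebra of the universal covering of an
Oeljeklaus-Toma manifold of type `(r,s)`, with basis `Z_k, Z̄_k, W_i, W̄_i` and structure
constants `λ_{ki}` with `λ_{ki} ≠ √−1/2`. Then every `ℂ`-linear derivation `D` of `𝔤`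
preserving `𝔤^{1,0}` and `𝔤^{0,1}` vanishes on `𝔥`: `D Z_k = 0` and `D Z̄_k = 0` for
every `k`. -/
theorem stmt_7 (r s : ℕ) (hr : 1 ≤ r) (hs : 1 ≤ s)
    (lam : Fin r → Fin s → ℂ) (hlam : ∀ k i, lam k i ≠ I / 2)
    (L : Type*) [LieRing L] [LieAlgebra ℂ L]
    (bas : Module.Basis ((Fin r ⊕ Fin r) ⊕ (Fin s ⊕ Fin s)) ℂ L)
    (Z Zb : Fin r → L) (W Wb : Fin s → L)
    (hZ : ∀ k, Z k = bas (Sum.inl (Sum.inl k)))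
    (hZb : ∀ k, Zb k = bas (Sum.inl (Sum.inr k)))
    (hW : ∀ i, W i = bas (Sum.inr (Sum.inl i)))
    (hWb : ∀ i, Wb i = bas (Sum.inr (Sum.inr i)))
    (hZZb : ∀ k l, ⁅Z k, Zb l⁆ = if k = l then (-(I / 2)) • (Z k + Zb k) else 0)
    (hZZ : ∀ k l, ⁅Z k, Z l⁆ = 0)
    (hZbZb : ∀ k l, ⁅Zb k, Zb l⁆ = 0)
    (hZW : ∀ k i, ⁅Z k, W i⁆ = (-(lam k i)) • W i)
    (hZbWb : ∀ k i, ⁅Zb k, Wb i⁆ = (-(starRingEnd ℂ (lam k i))) • Wb i)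
    (hZWb : ∀ k i, ⁅Z k, Wb i⁆ = (starRingEnd ℂ (lam k i)) • Wb i)
    (hZbW : ∀ k i, ⁅Zb k, W i⁆ = (lam k i) • W i)
    (hWW : ∀ i j, ⁅W i, W j⁆ = 0)
    (hWbWb : ∀ i j, ⁅Wb i, Wb j⁆ = 0)
    (hWWb : ∀ i j, ⁅W i, Wb j⁆ = 0)
    (D : L →ₗ[ℂ] L)
    (hDer : ∀ x y : L, D ⁅x, y⁆ = ⁅D x, y⁆ + ⁅x, D y⁆)
    (hD10 : ∀ x ∈ Submodule.span ℂ (Set.range Z ∪ Set.range W),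
      D x ∈ Submodule.span ℂ (Set.range Z ∪ Set.range W))
    (hD01 : ∀ x ∈ Submodule.span ℂ (Set.range Zb ∪ Set.range Wb),
      D x ∈ Submodule.span ℂ (Set.range Zb ∪ Set.range Wb)) :
    ∀ k, D (Z k) = 0 ∧ D (Zb k) = 0 :=
  stmt_7_general r s lam hlam L bas Z Zb W Wb hZ hZb hW hWb hZZb hZWb hZbW D hDer hD10 hD01
end

section
/- A ℂ-linear endomorphism D of 𝔤 with D(𝔤^{1,0}) ⊆ 𝔤^{1,0} and D(𝔤^{0,1}) ⊆ 𝔤^{0,1} is a derivation of 𝔤 if and only if D vanishes on 𝔥 and there exist complex numbers m_1, …, m_s and r_1, …, r_s with D W_i = m_i·W_i and D W̄_i = r_i·W̄_i for every i = 1, …, s. -/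
open Complex

/-!
Everything is read off coordinates in the basis `Z, Z̄, W, W̄`. If `D` is a derivation, applying
it to `[Z_k, Z̄_k] = c (Z_k + Z̄_k)` (with `c = -√-1/2`) and comparing coordinates forces
`D Z_k = 0`, because `c ≠ 0` and `c + λ_{kj} ≠ 0`. Then `[Z_i, W_i] = -λ_{ii} W_i` makes `D W_i` an
eigenvector of `ad Z_i` in `𝔤^{1,0}` for the eigenvalue `-λ_{ii}`, which differs from `0` and from
every `-λ_{ij}`, `j ≠ i`; so `D W_i ∈ ℂ W_i`. The exchange `Z ↔ Z̄`, `W ↔ W̄`, `c ↦ -c`, `λ ↦ λ̄`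
preserves all relations and gives the statements for `Z̄_k` and `W̄_i`. Conversely, such a `D` is
diagonal in the basis and every bracket of two basis vectors is an eigenvector of `D` for the sum
of their eigenvalues, which is exactly the derivation rule on a basis.
-/

open Set Submodule

theorem map_lie_eq_of_eigenbasis {ι K L : Type*} [CommRing K] [LieRing L] [LieAlgebra K L]
    (b : Module.Basis ι K L) (D : L →ₗ[K] L) (ν : ι → K) (hD : ∀ i, D (b i) = ν i • b i)
    (hbr : ∀ i j, D ⁅b i, b j⁆ = (ν i + ν j) • ⁅b i, b j⁆) (x y : L) :
    D ⁅x, y⁆ = ⁅D x, y⁆ + ⁅x, D y⁆ := by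
  let ad : L →ₗ[K] L →ₗ[K] L := (LieAlgebra.ad K L : L →ₗ[K] Module.End K L)
  have : ad.compr₂ D = ad ∘ₗ D + ad.compl₂ D :=
    LinearMap.ext_basis b b fun i j => by simp [ad, hD, hbr, add_smul]
  exact LinearMap.congr_fun₂ this x y

theorem Module.Basis.repr_apply_eq_mul_of_forall {ι K M : Type*} [CommRing K] [AddCommGroup M]
    [Module K M] (b : Module.Basis ι K M) (f : M →ₗ[K] M) {j j' : ι} {a : K}
    (hb : ∀ i, b.repr (f (b i)) j = a * b.repr (b i) j') (x : M) :
    b.repr (f x) j = a * b.repr x j' := by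
  have : b.coord j ∘ₗ f = a • b.coord j' := b.ext fun i => by simpa using hb i
  simpa using LinearMap.congr_fun this x

structure GenericWeights {κ K : Type*} [Field K] (c : K) (lam : κ → κ → K) : Prop where
  ne_zero : c ≠ 0
  add_ne_zero : ∀ k j, c + lam k j ≠ 0
  diag_ne_zero : ∀ i, lam i i ≠ 0
  ne_diag : ∀ i j, j ≠ i → lam i j ≠ lam i i

theorem genericWeights_of_im {κ : Type*} (c : ℂ) (lam : κ → κ → ℂ) (t : ℝ) (ht : t ≠ 0)
    (hc : c.im ≠ 0) (hct : c.im + t ≠ 0) (hoff : ∀ k i, k ≠ i → (lam k i).im = 0)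
    (hdiag : ∀ k, (lam k k).im = t) : GenericWeights c lam where
  ne_zero h := hc (by simp [h])
  add_ne_zero k j h := by
    have := congrArg Complex.im h
    obtain rfl | hkj := eq_or_ne k j
    · exact hct (by simpa [hdiag] using this)
    · exact hc (by simpa [hoff k j hkj] using this)
  diag_ne_zero i h := ht (by simpa [hdiag] using congrArg Complex.im h)
  ne_diag i j hji h :=
    ht (by simpa [hdiag, hoff i j hji.symm, eq_comm] using congrArg Complex.im h)

section

variable {κ K L : Type*} [DecidableEq κ] [Field K] [LieRing L] [LieAlgebra K L]

/-- `mu` stands for `λ̄` and `c` for `-√-1/2`; keeping them as independent parameters makes the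
relations invariant under `IsOTBasis.swap`. -/
structure IsOTBasis (b : Module.Basis ((κ ⊕ κ) ⊕ (κ ⊕ κ)) K L) (Z Zb W Wb : κ → L) (c : K)
    (lam mu : κ → κ → K) : Prop where
  Z_eq : ∀ k, Z k = b (.inl (.inl k))
  Zb_eq : ∀ k, Zb k = b (.inl (.inr k))
  W_eq : ∀ i, W i = b (.inr (.inl i))
  Wb_eq : ∀ i, Wb i = b (.inr (.inr i))
  lie_Z_Zb : ∀ k l, ⁅Z k, Zb l⁆ = if k = l then c • (Z k + Zb k) else 0
  lie_Z_Z : ∀ k l, ⁅Z k, Z l⁆ = 0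
  lie_Zb_Zb : ∀ k l, ⁅Zb k, Zb l⁆ = 0
  lie_Z_W : ∀ k i, ⁅Z k, W i⁆ = (-lam k i) • W i
  lie_Zb_Wb : ∀ k i, ⁅Zb k, Wb i⁆ = (-mu k i) • Wb i
  lie_Z_Wb : ∀ k i, ⁅Z k, Wb i⁆ = mu k i • Wb i
  lie_Zb_W : ∀ k i, ⁅Zb k, W i⁆ = lam k i • W i
  lie_W_W : ∀ i j, ⁅W i, W j⁆ = 0
  lie_Wb_Wb : ∀ i j, ⁅Wb i, Wb j⁆ = 0
  lie_W_Wb : ∀ i j, ⁅W i, Wb j⁆ = 0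

namespace IsOTBasis

variable {b : Module.Basis ((κ ⊕ κ) ⊕ (κ ⊕ κ)) K L} {Z Zb W Wb : κ → L} {c : K}
  {lam mu : κ → κ → K}

def swapIndex (ι : Type*) : (ι ⊕ ι) ⊕ (ι ⊕ ι) ≃ (ι ⊕ ι) ⊕ (ι ⊕ ι) :=
  (Equiv.sumComm ι ι).sumCongr (Equiv.sumComm ι ι)

theorem swap (h : IsOTBasis b Z Zb W Wb c lam mu) :
    IsOTBasis (b.reindex (swapIndex κ)) Zb Z Wb W (-c) mu lam where
  Z_eq k := by simp [h.Zb_eq, swapIndex]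
  Zb_eq k := by simp [h.Z_eq, swapIndex]
  W_eq i := by simp [h.Wb_eq, swapIndex]
  Wb_eq i := by simp [h.W_eq, swapIndex]
  lie_Z_Zb k l := by
    rw [← lie_skew, h.lie_Z_Zb]
    obtain rfl | hkl := eq_or_ne k l
    · simp [add_comm]
    · simp [hkl, hkl.symm]
  lie_Z_Z := h.lie_Zb_Zb
  lie_Zb_Zb := h.lie_Z_Z
  lie_Z_W := h.lie_Zb_Wb
  lie_Zb_Wb := h.lie_Z_W
  lie_Z_Wb := h.lie_Zb_W
  lie_Zb_W := h.lie_Z_Wb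
  lie_W_W := h.lie_Wb_Wb
  lie_Wb_Wb := h.lie_W_W
  lie_W_Wb i j := by rw [← lie_skew, h.lie_W_Wb, neg_zero]

theorem lie_W_Z (h : IsOTBasis b Z Zb W Wb c lam mu) (i k : κ) : ⁅W i, Z k⁆ = lam k i • W i := by
  rw [← lie_skew, h.lie_Z_W, neg_smul, neg_neg]

theorem lie_W_Zb (h : IsOTBasis b Z Zb W Wb c lam mu) (i k : κ) :
    ⁅W i, Zb k⁆ = (-lam k i) • W i := by
  rw [← lie_skew, h.lie_Zb_W, neg_smul]

theorem map_lie_eq (h : IsOTBasis b Z Zb W Wb c lam mu) {D : L →ₗ[K] L}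
    (hZ0 : ∀ k, D (Z k) = 0 ∧ D (Zb k) = 0) (m rr : κ → K)
    (hWm : ∀ i, D (W i) = m i • W i ∧ D (Wb i) = rr i • Wb i) (x y : L) :
    D ⁅x, y⁆ = ⁅D x, y⁆ + ⁅x, D y⁆ := by
  refine map_lie_eq_of_eigenbasis b D (Sum.elim 0 (Sum.elim m rr)) (fun i => ?_) (fun i j => ?_) x y
  · rcases i with (k | k) | (i | i) <;> simp [← h.Z_eq, ← h.Zb_eq, ← h.W_eq, ← h.Wb_eq, hZ0, hWm]
  · rcases i with (k | k) | (i | i) <;> rcases j with (l | l) | (j | j) <;>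
      simp [← h.Z_eq, ← h.Zb_eq, ← h.W_eq, ← h.Wb_eq, h.lie_Z_Zb, h.swap.lie_Z_Zb, h.lie_Z_Z,
        h.lie_Zb_Zb, h.lie_Z_W, h.lie_Zb_Wb, h.lie_Z_Wb, h.lie_Zb_W, h.lie_W_W, h.lie_Wb_Wb,
        h.lie_W_Wb, h.swap.lie_W_Wb, h.lie_W_Z, h.swap.lie_W_Z, h.lie_W_Zb, h.swap.lie_W_Zb,
        apply_ite D, hZ0, hWm, smul_smul, mul_comm]

theorem repr_Z (h : IsOTBasis b Z Zb W Wb c lam mu) (k : κ) :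
    b.repr (Z k) = Finsupp.single (.inl (.inl k)) 1 := by rw [h.Z_eq, b.repr_self]

theorem repr_Zb (h : IsOTBasis b Z Zb W Wb c lam mu) (k : κ) :
    b.repr (Zb k) = Finsupp.single (.inl (.inr k)) 1 := by rw [h.Zb_eq, b.repr_self]

theorem repr_W (h : IsOTBasis b Z Zb W Wb c lam mu) (i : κ) :
    b.repr (W i) = Finsupp.single (.inr (.inl i)) 1 := by rw [h.W_eq, b.repr_self]

theorem repr_Wb (h : IsOTBasis b Z Zb W Wb c lam mu) (i : κ) :
    b.repr (Wb i) = Finsupp.single (.inr (.inr i)) 1 := by rw [h.Wb_eq, b.repr_self]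

theorem repr_of_mem_span_Z_W (h : IsOTBasis b Z Zb W Wb c lam mu) {x : L}
    (hx : x ∈ span K (range Z ∪ range W)) (l : κ) :
    b.repr x (.inl (.inr l)) = 0 ∧ b.repr x (.inr (.inr l)) = 0 := by
  induction hx using span_induction with
  | mem x hx => rcases hx with ⟨k, rfl⟩ | ⟨i, rfl⟩ <;> simp [h.repr_Z, h.repr_W]
  | zero => simp
  | add x y _ _ hx hy => simp [hx, hy]
  | smul a x _ hx => simp [hx]

theorem repr_of_mem_span_Zb_Wb (h : IsOTBasis b Z Zb W Wb c lam mu) {x : L}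
    (hx : x ∈ span K (range Zb ∪ range Wb)) (l : κ) :
    b.repr x (.inl (.inl l)) = 0 ∧ b.repr x (.inr (.inl l)) = 0 := by
  simpa [swapIndex] using h.swap.repr_of_mem_span_Z_W hx l

theorem repr_lie_Z_at_Z (h : IsOTBasis b Z Zb W Wb c lam mu) (k l : κ) (x : L) :
    b.repr ⁅Z k, x⁆ (.inl (.inl l)) = if k = l then c * b.repr x (.inl (.inr k)) else 0 := by
  simpa [ite_mul] using b.repr_apply_eq_mul_of_forall (LieAlgebra.ad K L (Z k))
    (a := if k = l then c else 0) (fun i => by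
    rcases i with (l | l) | (l | l) <;>
      simp [← h.Z_eq, ← h.Zb_eq, ← h.W_eq, ← h.Wb_eq, h.lie_Z_Zb, h.lie_Z_Z, h.lie_Z_W, h.lie_Z_Wb,
        h.repr_Z, h.repr_Zb, h.repr_W, h.repr_Wb, Finsupp.single_apply]
    all_goals split_ifs <;> simp_all [h.repr_Z, h.repr_Zb]) x

theorem repr_lie_Z_at_Zb (h : IsOTBasis b Z Zb W Wb c lam mu) (k l : κ) (x : L) :
    b.repr ⁅Z k, x⁆ (.inl (.inr l)) = if k = l then c * b.repr x (.inl (.inr k)) else 0 := by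
  simpa [ite_mul] using b.repr_apply_eq_mul_of_forall (LieAlgebra.ad K L (Z k))
    (a := if k = l then c else 0) (fun i => by
    rcases i with (l | l) | (l | l) <;>
      simp [← h.Z_eq, ← h.Zb_eq, ← h.W_eq, ← h.Wb_eq, h.lie_Z_Zb, h.lie_Z_Z, h.lie_Z_W, h.lie_Z_Wb,
        h.repr_Z, h.repr_Zb, h.repr_W, h.repr_Wb, Finsupp.single_apply]
    all_goals split_ifs <;> simp_all [h.repr_Z, h.repr_Zb]) x

theorem repr_lie_Z_at_W (h : IsOTBasis b Z Zb W Wb c lam mu) (k j : κ) (x : L) :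
    b.repr ⁅Z k, x⁆ (.inr (.inl j)) = -lam k j * b.repr x (.inr (.inl j)) :=
  b.repr_apply_eq_mul_of_forall (LieAlgebra.ad K L (Z k)) (fun i => by
    rcases i with (l | l) | (l | l) <;>
      simp [← h.Z_eq, ← h.Zb_eq, ← h.W_eq, ← h.Wb_eq, h.lie_Z_Zb, h.lie_Z_Z, h.lie_Z_W, h.lie_Z_Wb,
        h.repr_Z, h.repr_Zb, h.repr_W, h.repr_Wb, Finsupp.single_apply]
    all_goals split_ifs <;> simp_all [h.repr_Z, h.repr_Zb]) x

theorem repr_lie_Z_at_Wb (h : IsOTBasis b Z Zb W Wb c lam mu) (k j : κ) (x : L) :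
    b.repr ⁅Z k, x⁆ (.inr (.inr j)) = mu k j * b.repr x (.inr (.inr j)) :=
  b.repr_apply_eq_mul_of_forall (LieAlgebra.ad K L (Z k)) (fun i => by
    rcases i with (l | l) | (l | l) <;>
      simp [← h.Z_eq, ← h.Zb_eq, ← h.W_eq, ← h.Wb_eq, h.lie_Z_Zb, h.lie_Z_Z, h.lie_Z_W, h.lie_Z_Wb,
        h.repr_Z, h.repr_Zb, h.repr_W, h.repr_Wb, Finsupp.single_apply]
    all_goals split_ifs <;> simp_all [h.repr_Z, h.repr_Zb]) x

theorem repr_lie_Zb_at_Z (h : IsOTBasis b Z Zb W Wb c lam mu) (k l : κ) (x : L) :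
    b.repr ⁅Zb k, x⁆ (.inl (.inl l)) = if k = l then -c * b.repr x (.inl (.inl k)) else 0 := by
  simpa [swapIndex] using h.swap.repr_lie_Z_at_Zb k l x

theorem repr_lie_Zb_at_Zb (h : IsOTBasis b Z Zb W Wb c lam mu) (k l : κ) (x : L) :
    b.repr ⁅Zb k, x⁆ (.inl (.inr l)) = if k = l then -c * b.repr x (.inl (.inl k)) else 0 := by
  simpa [swapIndex] using h.swap.repr_lie_Z_at_Z k l x

theorem repr_lie_Zb_at_W (h : IsOTBasis b Z Zb W Wb c lam mu) (k j : κ) (x : L) :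
    b.repr ⁅Zb k, x⁆ (.inr (.inl j)) = lam k j * b.repr x (.inr (.inl j)) := by
  simpa [swapIndex] using h.swap.repr_lie_Z_at_Wb k j x

theorem eq_zero_of_smul_add_eq_lie (h : IsOTBasis b Z Zb W Wb c lam mu) (hw : GenericWeights c lam)
    (k : κ) {x y : L} (hx : x ∈ span K (range Z ∪ range W)) (hy : y ∈ span K (range Zb ∪ range Wb))
    (hxy : c • (x + y) = ⁅x, Zb k⁆ + ⁅Z k, y⁆) : x = 0 := by
  rw [← lie_skew x (Zb k)] at hxy
  have coord (i) : c * (b.repr x i + b.repr y i) = -b.repr ⁅Zb k, x⁆ i + b.repr ⁅Z k, y⁆ i := by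
    simpa only [map_add, map_neg, map_smul, Finsupp.add_apply, Finsupp.neg_apply,
      Finsupp.smul_apply, smul_eq_mul] using congrArg (fun v => b.repr v i) hxy
  refine b.ext_elem fun i => ?_
  rw [map_zero, Finsupp.zero_apply]
  rcases i with (l | l) | (l | l)
  · obtain rfl | hkl := eq_or_ne k l
    · have := coord (.inl (.inr k))
      simp only [(h.repr_of_mem_span_Z_W hx k).1, h.repr_lie_Zb_at_Zb, h.repr_lie_Z_at_Zb,
        if_pos] at this
      exact (mul_eq_zero.1 (by linear_combination -this)).resolve_left hw.ne_zero
    · have := coord (.inl (.inl l))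
      simp only [(h.repr_of_mem_span_Zb_Wb hy l).1, h.repr_lie_Zb_at_Z, h.repr_lie_Z_at_Z,
        if_neg hkl] at this
      exact (mul_eq_zero.1 (by linear_combination this)).resolve_left hw.ne_zero
  · exact (h.repr_of_mem_span_Z_W hx l).1
  · have := coord (.inr (.inl l))
    simp only [(h.repr_of_mem_span_Zb_Wb hy l).2, h.repr_lie_Zb_at_W, h.repr_lie_Z_at_W] at this
    exact (mul_eq_zero.1 (by linear_combination this)).resolve_left (hw.add_ne_zero k l)
  · exact (h.repr_of_mem_span_Z_W hx l).2

theorem eq_smul_W_of_lie_Z_eq (h : IsOTBasis b Z Zb W Wb c lam mu) (hw : GenericWeights c lam)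
    (i : κ) {x : L} (hx : x ∈ span K (range Z ∪ range W)) (hxi : ⁅Z i, x⁆ = (-lam i i) • x) :
    x = b.repr x (.inr (.inl i)) • W i := by
  have coord (j) : b.repr ⁅Z i, x⁆ j = -lam i i * b.repr x j := by simp [hxi]
  refine b.ext_elem fun j => ?_
  rw [map_smul, Finsupp.smul_apply, h.repr_W, smul_eq_mul, Finsupp.single_apply]
  rcases j with (l | l) | (l | l)
  · have := coord (.inl (.inl l))
    rw [h.repr_lie_Z_at_Z, (h.repr_of_mem_span_Z_W hx i).1, mul_zero, ite_self] at this
    simpa [hw.diag_ne_zero i] using this.symm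
  · simpa using (h.repr_of_mem_span_Z_W hx l).1
  · obtain rfl | hli := eq_or_ne l i
    · simp
    · have := coord (.inr (.inl l))
      rw [h.repr_lie_Z_at_W] at this
      have hprod : (lam i l - lam i i) * b.repr x (.inr (.inl l)) = 0 := by
        linear_combination -this
      simpa [hli.symm, sub_ne_zero.2 (hw.ne_diag i l hli)] using hprod
  · simpa using (h.repr_of_mem_span_Z_W hx l).2

theorem map_Z_eq_zero_and_exists_map_W (h : IsOTBasis b Z Zb W Wb c lam mu)
    (hw : GenericWeights c lam) {D : L →ₗ[K] L} (hD : ∀ x y : L, D ⁅x, y⁆ = ⁅D x, y⁆ + ⁅x, D y⁆)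
    (hD10 : ∀ x ∈ span K (range Z ∪ range W), D x ∈ span K (range Z ∪ range W))
    (hD01 : ∀ x ∈ span K (range Zb ∪ range Wb), D x ∈ span K (range Zb ∪ range Wb)) :
    (∀ k, D (Z k) = 0) ∧ ∃ m : κ → K, ∀ i, D (W i) = m i • W i := by
  have hZ0 (k) : D (Z k) = 0 :=
    h.eq_zero_of_smul_add_eq_lie hw k (hD10 _ (subset_span (.inl ⟨k, rfl⟩)))
      (hD01 _ (subset_span (.inl ⟨k, rfl⟩)))
      (by rw [← hD, h.lie_Z_Zb, if_pos rfl, map_smul, map_add])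
  refine ⟨hZ0, fun i => b.repr (D (W i)) (.inr (.inl i)), fun i => ?_⟩
  refine h.eq_smul_W_of_lie_Z_eq hw i (hD10 _ (subset_span (.inr ⟨i, rfl⟩))) ?_
  simpa [h.lie_Z_W, hZ0] using (hD (Z i) (W i)).symm

theorem derivation_iff (h : IsOTBasis b Z Zb W Wb c lam mu) (hw : GenericWeights c lam)
    (hw' : GenericWeights (-c) mu) {D : L →ₗ[K] L}
    (hD10 : ∀ x ∈ span K (range Z ∪ range W), D x ∈ span K (range Z ∪ range W))
    (hD01 : ∀ x ∈ span K (range Zb ∪ range Wb), D x ∈ span K (range Zb ∪ range Wb)) :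
    (∀ x y : L, D ⁅x, y⁆ = ⁅D x, y⁆ + ⁅x, D y⁆) ↔
      ((∀ k, D (Z k) = 0 ∧ D (Zb k) = 0) ∧
        ∃ m rr : κ → K, ∀ i, D (W i) = m i • W i ∧ D (Wb i) = rr i • Wb i) := by
  refine ⟨fun hD => ?_, fun ⟨hZ0, m, rr, hWm⟩ => h.map_lie_eq hZ0 m rr hWm⟩
  obtain ⟨hZ0, m, hm⟩ := h.map_Z_eq_zero_and_exists_map_W hw hD hD10 hD01
  obtain ⟨hZb0, rr, hrr⟩ := h.swap.map_Z_eq_zero_and_exists_map_W hw' hD hD01 hD10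
  exact ⟨fun k => ⟨hZ0 k, hZb0 k⟩, m, rr, fun i => ⟨hm i, hrr i⟩⟩

end IsOTBasis

end

theorem stmt_8_general (s : ℕ)
    (lam : Fin s → Fin s → ℂ)
    (hlam_real : ∀ k i, k ≠ i → (lam k i).im = 0)
    (hlam_diag : ∀ k, (lam k k).im = -(1 / 4))
    (L : Type*) [LieRing L] [LieAlgebra ℂ L]
    (bas : Module.Basis ((Fin s ⊕ Fin s) ⊕ (Fin s ⊕ Fin s)) ℂ L)
    (Z Zb W Wb : Fin s → L)
    (hZ : ∀ k, Z k = bas (Sum.inl (Sum.inl k)))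
    (hZb : ∀ k, Zb k = bas (Sum.inl (Sum.inr k)))
    (hW : ∀ i, W i = bas (Sum.inr (Sum.inl i)))
    (hWb : ∀ i, Wb i = bas (Sum.inr (Sum.inr i)))
    (hZZb : ∀ k l, ⁅Z k, Zb l⁆ = if k = l then (-(I / 2)) • (Z k + Zb k) else 0)
    (hZZ : ∀ k l, ⁅Z k, Z l⁆ = 0)
    (hZbZb : ∀ k l, ⁅Zb k, Zb l⁆ = 0)
    (hZW : ∀ k i, ⁅Z k, W i⁆ = (-(lam k i)) • W i)
    (hZbWb : ∀ k i, ⁅Zb k, Wb i⁆ = (-(starRingEnd ℂ (lam k i))) • Wb i)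
    (hZWb : ∀ k i, ⁅Z k, Wb i⁆ = (starRingEnd ℂ (lam k i)) • Wb i)
    (hZbW : ∀ k i, ⁅Zb k, W i⁆ = (lam k i) • W i)
    (hWW : ∀ i j, ⁅W i, W j⁆ = 0)
    (hWbWb : ∀ i j, ⁅Wb i, Wb j⁆ = 0)
    (hWWb : ∀ i j, ⁅W i, Wb j⁆ = 0)
    (D : L →ₗ[ℂ] L)
    (hD10 : ∀ x ∈ Submodule.span ℂ (Set.range Z ∪ Set.range W),
      D x ∈ Submodule.span ℂ (Set.range Z ∪ Set.range W))
    (hD01 : ∀ x ∈ Submodule.span ℂ (Set.range Zb ∪ Set.range Wb),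
      D x ∈ Submodule.span ℂ (Set.range Zb ∪ Set.range Wb)) :
    (∀ x y : L, D ⁅x, y⁆ = ⁅D x, y⁆ + ⁅x, D y⁆) ↔
      ((∀ k, D (Z k) = 0 ∧ D (Zb k) = 0) ∧
        ∃ m rr : Fin s → ℂ, ∀ i, D (W i) = m i • W i ∧ D (Wb i) = rr i • Wb i) := by
  have h : IsOTBasis bas Z Zb W Wb (-(I / 2)) lam (fun k i => starRingEnd ℂ (lam k i)) :=
    ⟨hZ, hZb, hW, hWb, hZZb, hZZ, hZbZb, hZW, hZbWb, hZWb, hZbW, hWW, hWbWb, hWWb⟩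
  refine h.derivation_iff ?_ ?_ hD10 hD01
  · exact genericWeights_of_im _ lam (-(1 / 4)) (by norm_num) (by simp) (by norm_num) hlam_real
      hlam_diag
  · exact genericWeights_of_im _ _ (1 / 4) (by norm_num) (by simp) (by norm_num)
      (fun k i hki => by simp [hlam_real k i hki]) (fun k => by simp [hlam_diag])

/-- Let `𝔤` be the complexified Lie algebra of the universal covering of an
Oeljeklaus-Toma manifold admitting pluriclosed metrics (so `λ_{ki} ∈ ℝ` for `k ≠ i` and
`Im λ_{kk} = −1/4`). A `ℂ`-linear endomorphism `D` of `𝔤` preserving `𝔤^{1,0}` and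
`𝔤^{0,1}` is a derivation if and only if `D` vanishes on `𝔥` and there are complex numbers
`m_i`, `r_i` with `D W_i = m_i • W_i` and `D W̄_i = r_i • W̄_i` for every `i`. -/
theorem stmt_8 (s : ℕ) (hs : 1 ≤ s)
    (lam : Fin s → Fin s → ℂ)
    (hlam_real : ∀ k i, k ≠ i → (lam k i).im = 0)
    (hlam_diag : ∀ k, (lam k k).im = -(1 / 4))
    (L : Type*) [LieRing L] [LieAlgebra ℂ L]
    (bas : Module.Basis ((Fin s ⊕ Fin s) ⊕ (Fin s ⊕ Fin s)) ℂ L)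
    (Z Zb W Wb : Fin s → L)
    (hZ : ∀ k, Z k = bas (Sum.inl (Sum.inl k)))
    (hZb : ∀ k, Zb k = bas (Sum.inl (Sum.inr k)))
    (hW : ∀ i, W i = bas (Sum.inr (Sum.inl i)))
    (hWb : ∀ i, Wb i = bas (Sum.inr (Sum.inr i)))
    (hZZb : ∀ k l, ⁅Z k, Zb l⁆ = if k = l then (-(I / 2)) • (Z k + Zb k) else 0)
    (hZZ : ∀ k l, ⁅Z k, Z l⁆ = 0)
    (hZbZb : ∀ k l, ⁅Zb k, Zb l⁆ = 0)
    (hZW : ∀ k i, ⁅Z k, W i⁆ = (-(lam k i)) • W i)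
    (hZbWb : ∀ k i, ⁅Zb k, Wb i⁆ = (-(starRingEnd ℂ (lam k i))) • Wb i)
    (hZWb : ∀ k i, ⁅Z k, Wb i⁆ = (starRingEnd ℂ (lam k i)) • Wb i)
    (hZbW : ∀ k i, ⁅Zb k, W i⁆ = (lam k i) • W i)
    (hWW : ∀ i j, ⁅W i, W j⁆ = 0)
    (hWbWb : ∀ i j, ⁅Wb i, Wb j⁆ = 0)
    (hWWb : ∀ i j, ⁅W i, Wb j⁆ = 0)
    (D : L →ₗ[ℂ] L)
    (hD10 : ∀ x ∈ Submodule.span ℂ (Set.range Z ∪ Set.range W),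
      D x ∈ Submodule.span ℂ (Set.range Z ∪ Set.range W))
    (hD01 : ∀ x ∈ Submodule.span ℂ (Set.range Zb ∪ Set.range Wb),
      D x ∈ Submodule.span ℂ (Set.range Zb ∪ Set.range Wb)) :
    (∀ x y : L, D ⁅x, y⁆ = ⁅D x, y⁆ + ⁅x, D y⁆) ↔
      ((∀ k, D (Z k) = 0 ∧ D (Zb k) = 0) ∧
        ∃ m rr : Fin s → ℂ, ∀ i, D (W i) = m i • W i ∧ D (Wb i) = rr i • Wb i) :=
  stmt_8_general s lam hlam_real hlam_diag L bas Z Zb W Wb hZ hZb hW hWb hZZb hZZ hZbZb hZW hZbWb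
    hZWb hZbW hWW hWbWb hWWb D hD10 hD01
end

section
/- Assume Σ_{b=1}^{s} Im λ_{kb} = −1/4 for every k = 1, …, r. Then ρ_C(Z_i, Z̄_j) = −(√−1/4)·δ_{ij}, ρ_C(W_i, W̄_j) = 0 and ρ_C(Z_i, W̄_j) = ρ_C(W_i, Z̄_j) = 0 for all i, j, and ρ_C vanishes on 𝔤^{1,0} × 𝔤^{1,0} and on 𝔤^{0,1} × 𝔤^{0,1}. That is, ρ_C = −ω_∞, where ω_∞ is the alternating form with ω_∞(Z_i, Z̄_j) = (√−1/4)δ_{ij} and all other pairings of basis vectors equal to zero. -/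
/-!
Write `A y = Σ_a ω(⁅y, Z_a⁆, Z̄_a) + Σ_b ω(⁅y, W_b⁆, W̄_b)` and `B y` for the conjugate sums.
Since `𝔤 = 𝔤^{1,0} ⊕ 𝔤^{0,1}`, the functional `Φ = A ∘ (·)^{0,1} + B ∘ (·)^{1,0}` is linear and
`ρ_C(X, Y) = -Φ ⁅X, Y⁆`, so `ρ_C` is determined by `Φ` on brackets of basis vectors. Every such
bracket is a multiple of some `W_i` or `W̄_i`, on which `Φ` vanishes because `ω` is zero on
`𝔤^{1,0} × 𝔤^{1,0}` and on `𝔤^{0,1} × 𝔤^{0,1}`, except `⁅Z_k, Z̄_k⁆ = -(√−1/2)(Z_k + Z̄_k)`, and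
`Φ(Z_k + Z̄_k) = -1 - 2 Σ_b Im λ_{kb} = -1/2`.
-/

open Complex

section LieAlgebra

variable {ι R L : Type*} [CommRing R] [LieRing L] [LieAlgebra R L]

def bracketForm (φ : L →ₗ[R] R) : L →ₗ[R] L →ₗ[R] R :=
  (LieAlgebra.ad R L : L →ₗ[R] Module.End R L).compr₂ φ

@[simp]
lemma bracketForm_apply (φ : L →ₗ[R] R) (x y : L) : bracketForm φ x y = φ ⁅x, y⁆ := rfl

lemma bracketForm_isAlt (φ : L →ₗ[R] R) : (bracketForm φ).IsAlt := fun x => by simp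

variable [Fintype ι]

def pairedTrace (ω : L →ₗ[R] L →ₗ[R] R) (e f : ι → L) : L →ₗ[R] R :=
  ∑ a, ω.flip (f a) ∘ₗ (LieAlgebra.ad R L : L →ₗ[R] Module.End R L).flip (e a)

@[simp]
lemma pairedTrace_apply (ω : L →ₗ[R] L →ₗ[R] R) (e f : ι → L) (y : L) :
    pairedTrace ω e f y = ∑ a, ω ⁅y, e a⁆ (f a) := by
  simp [pairedTrace]

lemma pairedTrace_eq_zero_of_isotropic (ω : L →ₗ[R] L →ₗ[R] R) {e f : ι → L} {y : L}
    {V : Submodule R L} (hV : ∀ x ∈ V, ∀ z ∈ V, ω x z = 0) (he : ∀ a, ⁅y, e a⁆ ∈ V)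
    (hf : ∀ a, f a ∈ V) : pairedTrace ω e f y = 0 := by
  simp [hV _ (he _) _ (hf _)]

lemma pairedTrace_eq_sum_mul (ω : L →ₗ[R] L →ₗ[R] R) {e f : ι → L} {y : L} {c : ι → R} {d : R}
    (hc : ∀ a, ⁅y, e a⁆ = c a • e a) (hd : ∀ a, ω (e a) (f a) = d) :
    pairedTrace ω e f y = (∑ a, c a) * d := by
  simp [hc, hd, Finset.sum_mul]

lemma pairedTrace_eq_single [DecidableEq ι] (ω : L →ₗ[R] L →ₗ[R] R) {e f : ι → L} {y : L}
    (k : ι) (he : ∀ a, a ≠ k → ⁅y, e a⁆ = 0) : pairedTrace ω e f y = ω ⁅y, e k⁆ (f k) := by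
  rw [pairedTrace_apply, Finset.sum_eq_single k (fun a _ ha => by simp [he a ha]) (by simp)]

end LieAlgebra

section Bilinear

variable {ι κ R M : Type*} [CommRing R] [AddCommGroup M] [Module R M]

lemma LinearMap.IsAlt.ext_basis [LinearOrder κ] {B₁ B₂ : M →ₗ[R] M →ₗ[R] R} (h₁ : B₁.IsAlt)
    (h₂ : B₂.IsAlt) (b : Module.Basis ι R M) (f : ι → κ)
    (h : ∀ i j, f i ≤ f j → B₁ (b i) (b j) = B₂ (b i) (b j)) : B₁ = B₂ :=
  LinearMap.ext_basis b b fun i j => (le_total (f i) (f j)).elim (h i j) fun hji => by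
    rw [← h₁.neg, ← h₂.neg, h j i hji]

lemma LinearMap.IsAlt.eq_zero_of_mem_span_union {B : M →ₗ[R] M →ₗ[R] R} (hB : B.IsAlt)
    {e : ι → M} {f : κ → M} (hee : ∀ i j, B (e i) (e j) = 0) (hef : ∀ i j, B (e i) (f j) = 0)
    (hff : ∀ i j, B (f i) (f j) = 0) {x y : M}
    (hx : x ∈ Submodule.span R (Set.range e ∪ Set.range f))
    (hy : y ∈ Submodule.span R (Set.range e ∪ Set.range f)) : B x y = 0 := by
  have hgen : ∀ u ∈ Set.range e ∪ Set.range f, ∀ v ∈ Set.range e ∪ Set.range f, B u v = 0 := by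
    rintro _ (⟨i, rfl⟩ | ⟨i, rfl⟩) _ (⟨j, rfl⟩ | ⟨j, rfl⟩)
    exacts [hee i j, hef i j, by rw [← hB.neg, hef, neg_zero], hff i j]
  have hgen_left : ∀ u ∈ Set.range e ∪ Set.range f, B u y = 0 := fun u hu =>
    (Submodule.span_le (p := LinearMap.ker (B u))).2 (hgen u hu) hy
  exact (Submodule.span_le (p := LinearMap.ker (B.flip y))).2 hgen_left hx

open Set in
lemma Module.Basis.isCompl_span_inl_union_inr {α α' β β' : Type*}
    (b : Module.Basis ((α ⊕ α') ⊕ (β ⊕ β')) R M) :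
    IsCompl
      (Submodule.span R (range (fun k => b (.inl (.inl k))) ∪ range (fun i => b (.inr (.inl i)))))
      (Submodule.span R
        (range (fun k => b (.inl (.inr k))) ∪ range (fun i => b (.inr (.inr i))))) := by
  simp only [range_comp' b, ← image_union]
  refine b.linearIndependent.isCompl_span_image b.span_eq ⟨disjoint_left.2 ?_, codisjoint_iff.2 ?_⟩
  · rintro _ (⟨k, rfl⟩ | ⟨i, rfl⟩) (⟨l, h⟩ | ⟨j, h⟩) <;> simp at h
  · ext ((k | k) | (i | i)) <;> simp

end Bilinear

lemma LinearMap.ofIsCompl_domRestrict_apply {R E F : Type*} [Ring R] [AddCommGroup E]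
    [Module R E] [AddCommGroup F] [Module R F] {p q : Submodule R E} (h : IsCompl p q)
    (φ ψ : E →ₗ[R] F) {x u v : E} (hu : u ∈ p) (hv : v ∈ q) (hx : u + v = x) :
    ofIsCompl h (φ.domRestrict p) (ψ.domRestrict q) x = φ u + ψ v := by
  rw [← hx, map_add, ← Submodule.coe_mk u hu, ← Submodule.coe_mk v hv, ofIsCompl_apply_left,
    ofIsCompl_apply_right]
  rfl

lemma sum_mul_I_sub_conj_mul_I {ι : Type*} [Fintype ι] (z : ι → ℂ) :
    ∑ b, (z b * I - starRingEnd ℂ (z b) * I) = -2 * ((∑ b, (z b).im : ℝ) : ℂ) := by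
  push_cast
  rw [Finset.mul_sum]
  refine Finset.sum_congr rfl fun b _ => ?_
  rw [← sub_mul, sub_conj]
  push_cast
  linear_combination (2 * ((z b).im : ℂ)) * I_mul_I

lemma pairedTrace_Z_add_pairedTrace_Zb {ι κ L : Type*} [Fintype ι] [DecidableEq ι] [Fintype κ]
    [LieRing L] [LieAlgebra ℂ L] {ω : L →ₗ[ℂ] L →ₗ[ℂ] ℂ} (hω : ω.IsAlt) {Z Zb : ι → L}
    {W Wb : κ → L} {c : κ → ℂ} (hc : ∑ b, (c b).im = -(1 / 4)) (k : ι)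
    (hZZb : ∀ k l, ⁅Z k, Zb l⁆ = if k = l then (-(I / 2)) • (Z k + Zb k) else 0)
    (hZWb : ∀ b, ⁅Z k, Wb b⁆ = starRingEnd ℂ (c b) • Wb b) (hZbW : ∀ b, ⁅Zb k, W b⁆ = c b • W b)
    (hωZZ : ω (Z k) (Zb k) = I) (hωWW : ∀ b, ω (W b) (Wb b) = I) :
    (pairedTrace ω Zb Z + pairedTrace ω Wb W) (Z k) +
      (pairedTrace ω Z Zb + pairedTrace ω W Wb) (Zb k) = -(1 / 2) := by
  have hωZbZ : ω (Zb k) (Z k) = -I := by rw [← hω.neg, hωZZ]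
  have hωWbW : ∀ b, ω (Wb b) (W b) = -I := fun b => by rw [← hω.neg, hωWW]
  have hZ : pairedTrace ω Zb Z (Z k) = -(1 / 2) := by
    rw [pairedTrace_eq_single ω k fun a ha => by rw [hZZb, if_neg (Ne.symm ha)], hZZb, if_pos rfl]
    simp [hω.self_eq_zero, hωZbZ]
    linear_combination (1 / 2 : ℂ) * I_mul_I
  have hZb : pairedTrace ω Z Zb (Zb k) = -(1 / 2) := by
    rw [pairedTrace_eq_single ω k fun a ha => by rw [← lie_skew, hZZb, if_neg ha, neg_zero],
      ← lie_skew, hZZb, if_pos rfl]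
    simp [hω.self_eq_zero, hωZZ]
    linear_combination (1 / 2 : ℂ) * I_mul_I
  have hIm := sum_mul_I_sub_conj_mul_I c
  rw [hc, Finset.sum_sub_distrib, ← Finset.sum_mul, ← Finset.sum_mul] at hIm
  rw [LinearMap.add_apply, LinearMap.add_apply, hZ, hZb, pairedTrace_eq_sum_mul ω hZWb hωWbW,
    pairedTrace_eq_sum_mul ω hZbW hωWW]
  push_cast at hIm
  linear_combination hIm

lemma exists_chernRicci_eq_neg_apply_lie {r s : ℕ} (lam : Fin r → Fin s → ℂ)
    (hlam_sum : ∀ k, ∑ b, (lam k b).im = -(1 / 4)) {L : Type*} [LieRing L] [LieAlgebra ℂ L]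
    {Z Zb : Fin r → L} {W Wb : Fin s → L}
    (hcompl : IsCompl (Submodule.span ℂ (Set.range Z ∪ Set.range W))
      (Submodule.span ℂ (Set.range Zb ∪ Set.range Wb)))
    (hZZb : ∀ k l, ⁅Z k, Zb l⁆ = if k = l then (-(I / 2)) • (Z k + Zb k) else 0)
    (hZWb : ∀ k i, ⁅Z k, Wb i⁆ = (starRingEnd ℂ (lam k i)) • Wb i)
    (hZbW : ∀ k i, ⁅Zb k, W i⁆ = (lam k i) • W i)
    (hWWb : ∀ i j, ⁅W i, Wb j⁆ = 0)
    {p10 p01 : L → L}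
    (hp : ∀ v : L, p10 v ∈ Submodule.span ℂ (Set.range Z ∪ Set.range W) ∧
      p01 v ∈ Submodule.span ℂ (Set.range Zb ∪ Set.range Wb) ∧ p10 v + p01 v = v)
    {ω : L →ₗ[ℂ] L →ₗ[ℂ] ℂ} (hωalt : ω.IsAlt)
    (hω10 : ∀ x ∈ Submodule.span ℂ (Set.range Z ∪ Set.range W),
      ∀ y ∈ Submodule.span ℂ (Set.range Z ∪ Set.range W), ω x y = 0)
    (hω01 : ∀ x ∈ Submodule.span ℂ (Set.range Zb ∪ Set.range Wb),
      ∀ y ∈ Submodule.span ℂ (Set.range Zb ∪ Set.range Wb), ω x y = 0)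
    (hωZZ : ∀ i j, ω (Z i) (Zb j) = if i = j then I else 0)
    (hωWW : ∀ i j, ω (W i) (Wb j) = if i = j then I else 0)
    {ρC : L → L → ℂ}
    (hρ : ∀ X Y : L, ρC X Y =
      -(∑ a : Fin r, (ω ⁅p01 ⁅X, Y⁆, Z a⁆ (Zb a) + ω ⁅p10 ⁅X, Y⁆, Zb a⁆ (Z a)))
      - ∑ b : Fin s, (ω ⁅p01 ⁅X, Y⁆, W b⁆ (Wb b) + ω ⁅p10 ⁅X, Y⁆, Wb b⁆ (W b))) :
    ∃ Φ : L →ₗ[ℂ] ℂ, (∀ X Y, ρC X Y = -Φ ⁅X, Y⁆) ∧ (∀ i, Φ (W i) = 0) ∧ (∀ i, Φ (Wb i) = 0) ∧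
      ∀ k, Φ (Z k + Zb k) = -(1 / 2) := by
  set V10 := Submodule.span ℂ (Set.range Z ∪ Set.range W)
  set V01 := Submodule.span ℂ (Set.range Zb ∪ Set.range Wb)
  have hZm (k : Fin r) : Z k ∈ V10 := Submodule.subset_span (.inl ⟨k, rfl⟩)
  have hWm (i : Fin s) : W i ∈ V10 := Submodule.subset_span (.inr ⟨i, rfl⟩)
  have hZbm (k : Fin r) : Zb k ∈ V01 := Submodule.subset_span (.inl ⟨k, rfl⟩)
  have hWbm (i : Fin s) : Wb i ∈ V01 := Submodule.subset_span (.inr ⟨i, rfl⟩)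
  set A := pairedTrace ω Z Zb + pairedTrace ω W Wb
  set B := pairedTrace ω Zb Z + pairedTrace ω Wb W
  refine ⟨LinearMap.ofIsCompl hcompl (B.domRestrict V10) (A.domRestrict V01), fun X Y => ?_,
    fun i => ?_, fun i => ?_, fun k => ?_⟩
  · obtain ⟨h10, h01, hsum⟩ := hp ⁅X, Y⁆
    rw [hρ, LinearMap.ofIsCompl_domRestrict_apply hcompl B A h10 h01 hsum]
    simp only [A, B, LinearMap.add_apply, pairedTrace_apply, Finset.sum_add_distrib]
    ring
  · have hWZb (a : Fin r) : ⁅W i, Zb a⁆ ∈ V10 := by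
      rw [← lie_skew, hZbW]; exact neg_mem (Submodule.smul_mem _ _ (hWm i))
    have hWWb' (b : Fin s) : ⁅W i, Wb b⁆ ∈ V10 := by rw [hWWb]; exact zero_mem _
    rw [LinearMap.ofIsCompl_domRestrict_apply hcompl B A (hWm i) (zero_mem _) (add_zero _),
      map_zero, add_zero, LinearMap.add_apply, pairedTrace_eq_zero_of_isotropic ω hω10 hWZb hZm,
      pairedTrace_eq_zero_of_isotropic ω hω10 hWWb' hWm, add_zero]
  · have hWbZ (a : Fin r) : ⁅Wb i, Z a⁆ ∈ V01 := by
      rw [← lie_skew, hZWb]; exact neg_mem (Submodule.smul_mem _ _ (hWbm i))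
    have hWbW (b : Fin s) : ⁅Wb i, W b⁆ ∈ V01 := by
      rw [← lie_skew, hWWb, neg_zero]; exact zero_mem _
    rw [LinearMap.ofIsCompl_domRestrict_apply hcompl B A (zero_mem _) (hWbm i) (zero_add _),
      map_zero, zero_add, LinearMap.add_apply, pairedTrace_eq_zero_of_isotropic ω hω01 hWbZ hZbm,
      pairedTrace_eq_zero_of_isotropic ω hω01 hWbW hWbm, add_zero]
  · rw [LinearMap.ofIsCompl_domRestrict_apply hcompl B A (hZm k) (hZbm k) rfl]
    exact pairedTrace_Z_add_pairedTrace_Zb hωalt (hlam_sum k) k hZZb (hZWb k) (hZbW k)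
      (by rw [hωZZ, if_pos rfl]) fun b => by rw [hωWW, if_pos rfl]

theorem stmt_10_general (r s : ℕ)
    (lam : Fin r → Fin s → ℂ)
    (hlam_sum : ∀ k, ∑ b, (lam k b).im = -(1 / 4))
    (L : Type*) [LieRing L] [LieAlgebra ℂ L]
    (bas : Module.Basis ((Fin r ⊕ Fin r) ⊕ (Fin s ⊕ Fin s)) ℂ L)
    (Z Zb : Fin r → L) (W Wb : Fin s → L)
    (hZ : ∀ k, Z k = bas (Sum.inl (Sum.inl k)))
    (hZb : ∀ k, Zb k = bas (Sum.inl (Sum.inr k)))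
    (hW : ∀ i, W i = bas (Sum.inr (Sum.inl i)))
    (hWb : ∀ i, Wb i = bas (Sum.inr (Sum.inr i)))
    (hZZb : ∀ k l, ⁅Z k, Zb l⁆ = if k = l then (-(I / 2)) • (Z k + Zb k) else 0)
    (hZZ : ∀ k l, ⁅Z k, Z l⁆ = 0)
    (hZbZb : ∀ k l, ⁅Zb k, Zb l⁆ = 0)
    (hZW : ∀ k i, ⁅Z k, W i⁆ = (-(lam k i)) • W i)
    (hZbWb : ∀ k i, ⁅Zb k, Wb i⁆ = (-(starRingEnd ℂ (lam k i))) • Wb i)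
    (hZWb : ∀ k i, ⁅Z k, Wb i⁆ = (starRingEnd ℂ (lam k i)) • Wb i)
    (hZbW : ∀ k i, ⁅Zb k, W i⁆ = (lam k i) • W i)
    (hWW : ∀ i j, ⁅W i, W j⁆ = 0)
    (hWbWb : ∀ i j, ⁅Wb i, Wb j⁆ = 0)
    (hWWb : ∀ i j, ⁅W i, Wb j⁆ = 0)
    -- the (1,0)- and (0,1)-projections
    (p10 p01 : L → L)
    (hp : ∀ v : L, p10 v ∈ Submodule.span ℂ (Set.range Z ∪ Set.range W) ∧
      p01 v ∈ Submodule.span ℂ (Set.range Zb ∪ Set.range Wb) ∧ p10 v + p01 v = v)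
    -- the canonical left-invariant Hermitian metric `ω`
    (ω : L →ₗ[ℂ] L →ₗ[ℂ] ℂ)
    (hωalt : ∀ x : L, ω x x = 0)
    (hω10 : ∀ x ∈ Submodule.span ℂ (Set.range Z ∪ Set.range W),
      ∀ y ∈ Submodule.span ℂ (Set.range Z ∪ Set.range W), ω x y = 0)
    (hω01 : ∀ x ∈ Submodule.span ℂ (Set.range Zb ∪ Set.range Wb),
      ∀ y ∈ Submodule.span ℂ (Set.range Zb ∪ Set.range Wb), ω x y = 0)
    (hωZZ : ∀ i j, ω (Z i) (Zb j) = if i = j then I else 0)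
    (hωWW : ∀ i j, ω (W i) (Wb j) = if i = j then I else 0)
    -- the limit form `ω_∞`
    (ωinf : L →ₗ[ℂ] L →ₗ[ℂ] ℂ)
    (hωinfalt : ∀ x : L, ωinf x x = 0)
    (hωinfZZ : ∀ i j, ωinf (Z i) (Zb j) = if i = j then I / 4 else 0)
    (hωinfZ10 : ∀ i j, ωinf (Z i) (Z j) = 0)
    (hωinfZb : ∀ i j, ωinf (Zb i) (Zb j) = 0)
    (hωinfW : ∀ i j, ωinf (W i) (W j) = 0)
    (hωinfWWb : ∀ i j, ωinf (W i) (Wb j) = 0)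
    (hωinfWb : ∀ i j, ωinf (Wb i) (Wb j) = 0)
    (hωinfZW : ∀ i j, ωinf (Z i) (W j) = 0)
    (hωinfZWb : ∀ i j, ωinf (Z i) (Wb j) = 0)
    (hωinfZbW : ∀ i j, ωinf (Zb i) (W j) = 0)
    (hωinfZbWb : ∀ i j, ωinf (Zb i) (Wb j) = 0)
    -- the Chern-Ricci form
    (ρC : L → L → ℂ)
    (hρ : ∀ X Y : L, ρC X Y =
      -(∑ a : Fin r, (ω ⁅p01 ⁅X, Y⁆, Z a⁆ (Zb a) + ω ⁅p10 ⁅X, Y⁆, Zb a⁆ (Z a)))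
      - ∑ b : Fin s, (ω ⁅p01 ⁅X, Y⁆, W b⁆ (Wb b) + ω ⁅p10 ⁅X, Y⁆, Wb b⁆ (W b))) :
    (∀ i j, ρC (Z i) (Zb j) = if i = j then -(I / 4) else 0) ∧
    (∀ i j, ρC (W i) (Wb j) = 0) ∧
    (∀ i j, ρC (Z i) (Wb j) = 0) ∧
    (∀ i j, ρC (W i) (Zb j) = 0) ∧
    (∀ x ∈ Submodule.span ℂ (Set.range Z ∪ Set.range W),
      ∀ y ∈ Submodule.span ℂ (Set.range Z ∪ Set.range W), ρC x y = 0) ∧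
    (∀ x ∈ Submodule.span ℂ (Set.range Zb ∪ Set.range Wb),
      ∀ y ∈ Submodule.span ℂ (Set.range Zb ∪ Set.range Wb), ρC x y = 0) ∧
    (∀ X Y : L, ρC X Y = -(ωinf X Y)) := by
  have hcompl : IsCompl (Submodule.span ℂ (Set.range Z ∪ Set.range W))
      (Submodule.span ℂ (Set.range Zb ∪ Set.range Wb)) := by
    obtain rfl := funext hZ; obtain rfl := funext hZb; obtain rfl := funext hW
    obtain rfl := funext hWb
    exact bas.isCompl_span_inl_union_inr
  obtain ⟨Φ, hρΦ, hΦW, hΦWb, hΦZ⟩ := exists_chernRicci_eq_neg_apply_lie lam hlam_sum hcompl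
    hZZb hZWb hZbW hWWb hp hωalt hω10 hω01 hωZZ hωWW hρ
  have hΦZZb (k l : Fin r) : Φ ⁅Z k, Zb l⁆ = if k = l then I / 4 else 0 := by
    rw [hZZb]
    split_ifs
    · rw [map_smul, hΦZ, smul_eq_mul]
      ring
    · exact map_zero Φ
  have hform : bracketForm Φ = ωinf := by
    -- ranking the blocks `Z < Z̄ < W < W̄` leaves only the pairs of nondecreasing rank to check
    refine (bracketForm_isAlt Φ).ext_basis hωinfalt bas
      (Sum.elim (Sum.elim (fun _ => 0) fun _ => 1) (Sum.elim (fun _ => 2) fun _ => 3) : _ → ℕ) ?_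
    rintro ((k | k) | (k | k)) ((l | l) | (l | l)) hkl <;>
      simp only [← hZ, ← hZb, ← hW, ← hWb, bracketForm_apply] <;>
      simp [hZZ, hZbZb, hZW, hZbWb, hZWb, hZbW, hWW, hWbWb, hWWb, hΦW, hΦWb, hΦZZb, hωinfZZ,
        hωinfZ10, hωinfZb, hωinfW, hωinfWWb, hωinfWb, hωinfZW, hωinfZWb, hωinfZbW,
        hωinfZbWb] at hkl ⊢
  have hmain (X Y : L) : ρC X Y = -ωinf X Y := by rw [hρΦ, ← hform, bracketForm_apply]
  refine ⟨fun i j => ?_, fun i j => ?_, fun i j => ?_, fun i j => ?_, fun x hx y hy => ?_,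
    fun x hx y hy => ?_, hmain⟩
  · rw [hmain, hωinfZZ, apply_ite Neg.neg, neg_zero]
  · rw [hmain, hωinfWWb, neg_zero]
  · rw [hmain, hωinfZWb, neg_zero]
  · rw [hmain, ← LinearMap.IsAlt.neg hωinfalt, hωinfZbW, neg_zero, neg_zero]
  · rw [hmain, LinearMap.IsAlt.eq_zero_of_mem_span_union hωinfalt hωinfZ10 hωinfZW hωinfW hx hy,
      neg_zero]
  · rw [hmain, LinearMap.IsAlt.eq_zero_of_mem_span_union hωinfalt hωinfZb hωinfZbWb hωinfWb hx hy,
      neg_zero]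

/-- On the Lie algebra of the universal covering of an Oeljeklaus-Toma
manifold (with `Σ_b Im λ_{kb} = −1/4` for every `k`), the Chern-Ricci form of the canonical
left-invariant metric satisfies `ρ_C(Z_i, Z̄_j) = −(√−1/4)δ_{ij}`, `ρ_C(W_i, W̄_j) = 0`,
`ρ_C(Z_i, W̄_j) = ρ_C(W_i, Z̄_j) = 0`, and it vanishes on `𝔤^{1,0} × 𝔤^{1,0}` and on
`𝔤^{0,1} × 𝔤^{0,1}`; that is, `ρ_C = −ω_∞`. -/
theorem stmt_10 (r s : ℕ) (hr : 1 ≤ r) (hs : 1 ≤ s)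
    (lam : Fin r → Fin s → ℂ)
    (hlam_sum : ∀ k, ∑ b, (lam k b).im = -(1 / 4))
    (L : Type*) [LieRing L] [LieAlgebra ℂ L]
    (bas : Module.Basis ((Fin r ⊕ Fin r) ⊕ (Fin s ⊕ Fin s)) ℂ L)
    (Z Zb : Fin r → L) (W Wb : Fin s → L)
    (hZ : ∀ k, Z k = bas (Sum.inl (Sum.inl k)))
    (hZb : ∀ k, Zb k = bas (Sum.inl (Sum.inr k)))
    (hW : ∀ i, W i = bas (Sum.inr (Sum.inl i)))
    (hWb : ∀ i, Wb i = bas (Sum.inr (Sum.inr i)))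
    (hZZb : ∀ k l, ⁅Z k, Zb l⁆ = if k = l then (-(I / 2)) • (Z k + Zb k) else 0)
    (hZZ : ∀ k l, ⁅Z k, Z l⁆ = 0)
    (hZbZb : ∀ k l, ⁅Zb k, Zb l⁆ = 0)
    (hZW : ∀ k i, ⁅Z k, W i⁆ = (-(lam k i)) • W i)
    (hZbWb : ∀ k i, ⁅Zb k, Wb i⁆ = (-(starRingEnd ℂ (lam k i))) • Wb i)
    (hZWb : ∀ k i, ⁅Z k, Wb i⁆ = (starRingEnd ℂ (lam k i)) • Wb i)
    (hZbW : ∀ k i, ⁅Zb k, W i⁆ = (lam k i) • W i)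
    (hWW : ∀ i j, ⁅W i, W j⁆ = 0)
    (hWbWb : ∀ i j, ⁅Wb i, Wb j⁆ = 0)
    (hWWb : ∀ i j, ⁅W i, Wb j⁆ = 0)
    -- the (1,0)- and (0,1)-projections
    (p10 p01 : L → L)
    (hp : ∀ v : L, p10 v ∈ Submodule.span ℂ (Set.range Z ∪ Set.range W) ∧
      p01 v ∈ Submodule.span ℂ (Set.range Zb ∪ Set.range Wb) ∧ p10 v + p01 v = v)
    -- the canonical left-invariant Hermitian metric `ω`
    (ω : L →ₗ[ℂ] L →ₗ[ℂ] ℂ)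
    (hωalt : ∀ x : L, ω x x = 0)
    (hω10 : ∀ x ∈ Submodule.span ℂ (Set.range Z ∪ Set.range W),
      ∀ y ∈ Submodule.span ℂ (Set.range Z ∪ Set.range W), ω x y = 0)
    (hω01 : ∀ x ∈ Submodule.span ℂ (Set.range Zb ∪ Set.range Wb),
      ∀ y ∈ Submodule.span ℂ (Set.range Zb ∪ Set.range Wb), ω x y = 0)
    (hωZZ : ∀ i j, ω (Z i) (Zb j) = if i = j then I else 0)
    (hωWW : ∀ i j, ω (W i) (Wb j) = if i = j then I else 0)
    (hωZW : ∀ i j, ω (Z i) (Wb j) = 0)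
    (hωWZ : ∀ i j, ω (W i) (Zb j) = 0)
    -- the limit form `ω_∞`
    (ωinf : L →ₗ[ℂ] L →ₗ[ℂ] ℂ)
    (hωinfalt : ∀ x : L, ωinf x x = 0)
    (hωinfZZ : ∀ i j, ωinf (Z i) (Zb j) = if i = j then I / 4 else 0)
    (hωinfZ10 : ∀ i j, ωinf (Z i) (Z j) = 0)
    (hωinfZb : ∀ i j, ωinf (Zb i) (Zb j) = 0)
    (hωinfW : ∀ i j, ωinf (W i) (W j) = 0)
    (hωinfWWb : ∀ i j, ωinf (W i) (Wb j) = 0)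
    (hωinfWb : ∀ i j, ωinf (Wb i) (Wb j) = 0)
    (hωinfZW : ∀ i j, ωinf (Z i) (W j) = 0)
    (hωinfZWb : ∀ i j, ωinf (Z i) (Wb j) = 0)
    (hωinfZbW : ∀ i j, ωinf (Zb i) (W j) = 0)
    (hωinfZbWb : ∀ i j, ωinf (Zb i) (Wb j) = 0)
    -- the Chern-Ricci form
    (ρC : L → L → ℂ)
    (hρ : ∀ X Y : L, ρC X Y =
      -(∑ a : Fin r, (ω ⁅p01 ⁅X, Y⁆, Z a⁆ (Zb a) + ω ⁅p10 ⁅X, Y⁆, Zb a⁆ (Z a)))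
      - ∑ b : Fin s, (ω ⁅p01 ⁅X, Y⁆, W b⁆ (Wb b) + ω ⁅p10 ⁅X, Y⁆, Wb b⁆ (W b))) :
    (∀ i j, ρC (Z i) (Zb j) = if i = j then -(I / 4) else 0) ∧
    (∀ i j, ρC (W i) (Wb j) = 0) ∧
    (∀ i j, ρC (Z i) (Wb j) = 0) ∧
    (∀ i j, ρC (W i) (Zb j) = 0) ∧
    (∀ x ∈ Submodule.span ℂ (Set.range Z ∪ Set.range W),
      ∀ y ∈ Submodule.span ℂ (Set.range Z ∪ Set.range W), ρC x y = 0) ∧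
    (∀ x ∈ Submodule.span ℂ (Set.range Zb ∪ Set.range Wb),
      ∀ y ∈ Submodule.span ℂ (Set.range Zb ∪ Set.range Wb), ρC x y = 0) ∧
    (∀ X Y : L, ρC X Y = -(ωinf X Y)) :=
  stmt_10_general r s lam hlam_sum L bas Z Zb W Wb hZ hZb hW hWb hZZb hZZ hZbZb hZW hZbWb hZWb hZbW
    hWW hWbWb hWWb p10 p01 hp ω hωalt hω10 hω01 hωZZ hωWW ωinf hωinfalt hωinfZZ hωinfZ10 hωinfZb
    hωinfW hωinfWWb hωinfWb hωinfZW hωinfZWb hωinfZbW hωinfZbWb ρC hρ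
end

section
/- The Bismut-Ricci form satisfies: ρ_B(Z_i, Z̄_j) = 0 for all i ≠ j; ρ_B(Z_{p_t}, Z̄_{p_t}) = −(3·√−1/4)·(1 + |C_t|²/(A_{p_t}B_{p_t} − |C_t|²)) for every t = 1,…,m; ρ_B(Z_i, Z̄_i) = −3·√−1/4 for every i ∉ {p_1,…,p_m}; ρ_B(W_i, W̄_j) = 0 for all i, j; ρ_B(Z_i, W̄_j) = 0 unless i = j = p_t for some t; and ρ_B(Z_{p_t}, W̄_{p_t}) = −√−1·(−3/16 − c_{p_t p_t}²/4 − √−1·c_{p_t p_t}/4)·B_{p_t}·C_t/(A_{p_t}B_{p_t} − |C_t|²) for every t = 1,…,m. -/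
/-!
The Gram matrix `g` of `ω` in the frames `(Z, W)`, `(Z̄, W̄)` is made of four diagonal blocks, so
`g⁻¹` is explicit and Hermitian. Contracting `g⁻¹` against `ω` turns the first two sums in `ρ_B`
into `√−1 tr(ad [X, Y]^{1,0} on 𝔤^{1,0})` and `−√−1 tr(ad [X, Y]^{0,1} on 𝔤^{0,1})`:
these are metric independent, and for `[Z_i, Z̄_i] = −(√−1/2)(Z_i + Z̄_i)` they only see
`Im λ_{ii} = −1/4`. The metric enters through the torsion sum alone, which the block structure
collapses to one `2 × 2` block per index. Off the diagonal, `[Z_i, W̄_j] = λ̄_{ij} W̄_j` is killed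
either by `λ_{i p_t} = 0` or by `C = 0` away from the `p_t`.
-/

open Complex ComplexConjugate Matrix

theorem proj_add_eq_of_disjoint {R M : Type*} [Ring R] [AddCommGroup M] [Module R M]
    {V₁ V₂ : Submodule R M} (hV : Disjoint V₁ V₂) {p₁ p₂ : M → M}
    (hp : ∀ v, p₁ v ∈ V₁ ∧ p₂ v ∈ V₂ ∧ p₁ v + p₂ v = v) {x y : M} (hx : x ∈ V₁) (hy : y ∈ V₂) :
    p₁ (x + y) = x ∧ p₂ (x + y) = y := by
  obtain ⟨h₁, h₂, hsum⟩ := hp (x + y)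
  have h := Submodule.disjoint_iff_add_eq_zero.mp hV (sub_mem h₁ hx) (sub_mem h₂ hy)
    (by rw [sub_add_sub_comm, hsum, sub_self])
  exact ⟨sub_eq_zero.mp h.1, sub_eq_zero.mp h.2⟩

theorem Module.Basis.disjoint_span_range_union {ι R M : Type*} [Semiring R] [AddCommMonoid M]
    [Module R M] (b : Module.Basis ((ι ⊕ ι) ⊕ (ι ⊕ ι)) R M) {Z Zb W Wb : ι → M}
    (hZ : ∀ k, Z k = b (.inl (.inl k))) (hZb : ∀ k, Zb k = b (.inl (.inr k)))
    (hW : ∀ k, W k = b (.inr (.inl k))) (hWb : ∀ k, Wb k = b (.inr (.inr k))) :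
    Disjoint (Submodule.span R (Set.range Z ∪ Set.range W))
      (Submodule.span R (Set.range Zb ∪ Set.range Wb)) := by
  have h₁ : Set.range Z ∪ Set.range W =
      b '' (Set.range (.inl ∘ .inl) ∪ Set.range (.inr ∘ .inl)) := by
    simp only [Set.image_union, ← Set.range_comp, Function.comp_def, ← hZ, ← hW]
  have h₂ : Set.range Zb ∪ Set.range Wb =
      b '' (Set.range (.inl ∘ .inr) ∪ Set.range (.inr ∘ .inr)) := by
    simp only [Set.image_union, ← Set.range_comp, Function.comp_def, ← hZb, ← hWb]
  rw [h₁, h₂]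
  refine b.linearIndependent.disjoint_span_image (Set.disjoint_left.mpr ?_)
  rintro _ (⟨k, rfl⟩ | ⟨k, rfl⟩) (⟨l, h⟩ | ⟨l, h⟩) <;> simp at h

theorem mem_span_range_union_left {R M ι : Type*} [Semiring R] [AddCommMonoid M] [Module R M]
    (X Y : ι → M) (k : ι) : X k ∈ Submodule.span R (Set.range X ∪ Set.range Y) :=
  Submodule.subset_span (Or.inl ⟨k, rfl⟩)

theorem mem_span_range_union_right {R M ι : Type*} [Semiring R] [AddCommMonoid M] [Module R M]
    (X Y : ι → M) (k : ι) : Y k ∈ Submodule.span R (Set.range X ∪ Set.range Y) :=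
  Submodule.subset_span (Or.inr ⟨k, rfl⟩)

theorem Function.Injective.exists_eq_and_eq_zero_off_range {κ ι R : Type*} [Zero R] {p : κ → ι}
    (hp : Function.Injective p) (C : κ → R) :
    ∃ CC : ι → R, (∀ t, CC (p t) = C t) ∧ ∀ i, (∀ t, i ≠ p t) → CC i = 0 :=
  ⟨Function.extend p C 0, hp.extend_apply C 0,
    fun _ hi => Function.extend_apply' _ _ _ fun ⟨t, ht⟩ => hi t ht.symm⟩

theorem eq_ite_of_eq_zero_off_range {ι κ R : Type*} [DecidableEq ι] [Zero R] (p : κ → ι)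
    (c : ι → R) {F : ι → ι → R} (hF0 : ∀ i j, (¬∃ t, i = p t ∧ j = p t) → F i j = 0)
    (hFc : ∀ t, F (p t) (p t) = c (p t)) (hc : ∀ i, (∀ t, i ≠ p t) → c i = 0) (i j : ι) :
    F i j = if i = j then c i else 0 := by
  by_cases h : ∃ t, i = p t ∧ j = p t
  · obtain ⟨t, rfl, rfl⟩ := h
    rw [hFc, if_pos rfl]
  · rw [hF0 i j h]
    split_ifs with hij
    · subst hij
      exact (hc i fun t ht => h ⟨t, ht, ht⟩).symm
    · rfl

theorem fromBlocks_diagonal_mul_eq_one {ι K : Type*} [Fintype ι] [DecidableEq ι] [Field K]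
    {a b c d : ι → K} (h : ∀ i, a i * d i - b i * c i ≠ 0) :
    fromBlocks (diagonal a) (diagonal b) (diagonal c) (diagonal d) *
      fromBlocks (diagonal fun i => d i / (a i * d i - b i * c i))
        (diagonal fun i => -b i / (a i * d i - b i * c i))
        (diagonal fun i => -c i / (a i * d i - b i * c i))
        (diagonal fun i => a i / (a i * d i - b i * c i)) = 1 := by
  rw [fromBlocks_multiply, ← fromBlocks_one]
  simp only [diagonal_mul_diagonal, diagonal_add, ← diagonal_one, ← diagonal_zero]
  congr 2 <;> funext i <;> rw [mul_div_assoc', mul_div_assoc', ← add_div]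
  · rw [mul_neg, ← sub_eq_add_neg, div_self (h i)]
  · ring
  · ring
  · rw [← div_self (h i)]; ring

section Trace

variable {ι M : Type*} [Fintype ι] [DecidableEq ι] [AddCommGroup M] [Module ℂ M]
  {ω : M →ₗ[ℂ] M →ₗ[ℂ] ℂ} {e f : ι → M} {G H : Matrix ι ι ℂ}

theorem sum_conj_mul_eq_I_mul_trace (hG : ∀ a b, ω (e a) (f b) = I * G a b) (hGH : G * H = 1)
    (hH : H.IsHermitian) {x : ι → M} (N : Matrix ι ι ℂ) (hx : ∀ a, x a = ∑ c, N c a • e c) :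
    ∑ a, ∑ b, conj (H a b) * ω (x a) (f b) = I * N.trace := by
  have hconj : ∀ a b, conj (H a b) = H b a := fun a b => hH.apply b a
  calc ∑ a, ∑ b, conj (H a b) * ω (x a) (f b)
      = I * ∑ a, ∑ c, N c a * (G * H) c a := by
        simp only [hx, LinearMap.map_sum₂, LinearMap.map_smul₂, smul_eq_mul, hG, hconj, mul_apply,
          Finset.mul_sum]
        rw [Finset.sum_congr rfl fun a _ => Finset.sum_comm]
        refine Finset.sum_congr rfl fun a _ => Finset.sum_congr rfl fun c _ =>
          Finset.sum_congr rfl fun b _ => ?_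
        ring
    _ = I * N.trace := by simp [hGH, one_apply, trace]

theorem sum_mul_eq_neg_I_mul_trace (hω : ω.IsAlt) (hG : ∀ a b, ω (e a) (f b) = I * G a b)
    (hHG : H * G = 1) {y : ι → M} (N : Matrix ι ι ℂ) (hy : ∀ a, y a = ∑ c, N c a • f c) :
    ∑ a, ∑ b, H a b * ω (y a) (e b) = -I * N.trace := by
  have hfe : ∀ a b, ω (f a) (e b) = -(I * G b a) := fun a b => by rw [← hω.neg, hG]
  calc ∑ a, ∑ b, H a b * ω (y a) (e b)
      = -I * ∑ a, ∑ c, N c a * (H * G) a c := by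
        simp only [hy, LinearMap.map_sum₂, LinearMap.map_smul₂, smul_eq_mul, hfe,
          mul_apply, Finset.mul_sum]
        rw [Finset.sum_congr rfl fun a _ => Finset.sum_comm]
        refine Finset.sum_congr rfl fun a _ => Finset.sum_congr rfl fun c _ =>
          Finset.sum_congr rfl fun b _ => ?_
        ring
    _ = -I * N.trace := by simp [hHG, one_apply, trace]

end Trace

section Ricci

variable {L ι : Type*} [LieRing L] [LieAlgebra ℂ L] [Fintype ι]

structure IsTypeDecomposition (V₁ V₂ : Submodule ℂ L) (p10 p01 J : L → L) : Prop where
  proj_add : ∀ x ∈ V₁, ∀ y ∈ V₂, p10 (x + y) = x ∧ p01 (x + y) = y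
  J_eq : ∀ v, J v = I • p10 v - I • p01 v

/-- `ρ_B` with `H a b = g^{b̄ a}` (so `conj (H a b) = g^{a b̄}`) and frames `e = X`, `f = X̄`. -/
def bismutRicci (ω : L →ₗ[ℂ] L →ₗ[ℂ] ℂ) (H : Matrix ι ι ℂ) (e f : ι → L) (p10 p01 J : L → L)
    (X Y : L) : ℂ :=
  -(∑ a, ∑ b, (conj (H a b) * ω ⁅p10 ⁅X, Y⁆, e a⁆ (f b) + H a b * ω ⁅p01 ⁅X, Y⁆, f a⁆ (e b)))
    + I * ∑ a, ∑ b, conj (H a b) * ω ⁅X, Y⁆ (J ⁅e a, f b⁆)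

def ricciHol (ω : L →ₗ[ℂ] L →ₗ[ℂ] ℂ) (H : Matrix ι ι ℂ) (e f : ι → L) (u : L) : ℂ :=
  ∑ a, ∑ b, conj (H a b) * ω ⁅u, e a⁆ (f b)

def ricciAntihol (ω : L →ₗ[ℂ] L →ₗ[ℂ] ℂ) (H : Matrix ι ι ℂ) (e f : ι → L) (u : L) : ℂ :=
  ∑ a, ∑ b, H a b * ω ⁅u, f a⁆ (e b)

def ricciTorsion (ω : L →ₗ[ℂ] L →ₗ[ℂ] ℂ) (H : Matrix ι ι ℂ) (e f : ι → L) (J : L → L) (v : L) :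
    ℂ :=
  ∑ a, ∑ b, conj (H a b) * ω v (J ⁅e a, f b⁆)

variable {ω : L →ₗ[ℂ] L →ₗ[ℂ] ℂ} {H : Matrix ι ι ℂ} {e f : ι → L}
  {V₁ V₂ : Submodule ℂ L} {p10 p01 J : L → L} {x y : L}

theorem IsTypeDecomposition.J_add (hT : IsTypeDecomposition V₁ V₂ p10 p01 J) (hx : x ∈ V₁)
    (hy : y ∈ V₂) : J (x + y) = I • x - I • y := by
  rw [hT.J_eq, (hT.proj_add x hx y hy).1, (hT.proj_add x hx y hy).2]

theorem bismutRicci_eq (hT : IsTypeDecomposition V₁ V₂ p10 p01 J) (hx : x ∈ V₁) (hy : y ∈ V₂)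
    {X Y : L} (hXY : ⁅X, Y⁆ = x + y) :
    bismutRicci ω H e f p10 p01 J X Y =
      -(ricciHol ω H e f x + ricciAntihol ω H e f y) + I * ricciTorsion ω H e f J (x + y) := by
  obtain ⟨h10, h01⟩ := hT.proj_add x hx y hy
  rw [bismutRicci, hXY, h10, h01]
  simp only [ricciHol, ricciAntihol, ricciTorsion, Finset.sum_add_distrib]

theorem bismutRicci_eq_zero (hT : IsTypeDecomposition V₁ V₂ p10 p01 J) {X Y : L}
    (hXY : ⁅X, Y⁆ = 0) : bismutRicci ω H e f p10 p01 J X Y = 0 := by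
  rw [bismutRicci_eq hT V₁.zero_mem V₂.zero_mem (hXY.trans (add_zero 0).symm)]
  simp [ricciHol, ricciAntihol, ricciTorsion]

theorem ricciHol_smul (c : ℂ) (u : L) : ricciHol ω H e f (c • u) = c * ricciHol ω H e f u := by
  simp only [ricciHol, smul_lie, map_smul, LinearMap.smul_apply, smul_eq_mul, Finset.mul_sum,
    mul_left_comm]

theorem ricciAntihol_smul (c : ℂ) (u : L) :
    ricciAntihol ω H e f (c • u) = c * ricciAntihol ω H e f u := by
  simp only [ricciAntihol, smul_lie, map_smul, LinearMap.smul_apply, smul_eq_mul, Finset.mul_sum,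
    mul_left_comm]

end Ricci

section OT

variable {L : Type*} [LieRing L] [LieAlgebra ℂ L] {s : ℕ} {lam : Fin s → Fin s → ℂ}
  {Z Zb W Wb : Fin s → L} {A B : Fin s → ℝ} {CC : Fin s → ℂ} {ω : L →ₗ[ℂ] L →ₗ[ℂ] ℂ}
  {p10 p01 J : L → L}

local notation "𝔤¹⁰" => Submodule.span ℂ (Set.range Z ∪ Set.range W)
local notation "𝔤⁰¹" => Submodule.span ℂ (Set.range Zb ∪ Set.range Wb)

structure IsOTFrame (lam : Fin s → Fin s → ℂ) (Z Zb W Wb : Fin s → L) : Prop where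
  lie_Z_Zb : ∀ k l, ⁅Z k, Zb l⁆ = if k = l then (-(I / 2)) • (Z k + Zb k) else 0
  lie_Z_Z : ∀ k l, ⁅Z k, Z l⁆ = 0
  lie_Zb_Zb : ∀ k l, ⁅Zb k, Zb l⁆ = 0
  lie_Z_W : ∀ k i, ⁅Z k, W i⁆ = (-lam k i) • W i
  lie_Zb_Wb : ∀ k i, ⁅Zb k, Wb i⁆ = (-conj (lam k i)) • Wb i
  lie_Z_Wb : ∀ k i, ⁅Z k, Wb i⁆ = conj (lam k i) • Wb i
  lie_Zb_W : ∀ k i, ⁅Zb k, W i⁆ = lam k i • W i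
  lie_Wb_Wb : ∀ i j, ⁅Wb i, Wb j⁆ = 0
  lie_W_Wb : ∀ i j, ⁅W i, Wb j⁆ = 0

structure IsOTMetric (ω : L →ₗ[ℂ] L →ₗ[ℂ] ℂ) (A B : Fin s → ℝ) (CC : Fin s → ℂ)
    (Z Zb W Wb : Fin s → L) : Prop where
  isAlt : ω.IsAlt
  holo : ∀ x ∈ Submodule.span ℂ (Set.range Z ∪ Set.range W),
    ∀ y ∈ Submodule.span ℂ (Set.range Z ∪ Set.range W), ω x y = 0
  antiholo : ∀ x ∈ Submodule.span ℂ (Set.range Zb ∪ Set.range Wb),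
    ∀ y ∈ Submodule.span ℂ (Set.range Zb ∪ Set.range Wb), ω x y = 0
  Z_Zb : ∀ i j, ω (Z i) (Zb j) = if i = j then I * A i else 0
  W_Wb : ∀ i j, ω (W i) (Wb j) = if i = j then I * B i else 0
  Z_Wb : ∀ i j, ω (Z i) (Wb j) = if i = j then I * CC i else 0
  W_Zb : ∀ i j, ω (W i) (Zb j) = if i = j then I * conj (CC i) else 0

noncomputable def otDet (A B : Fin s → ℝ) (CC : Fin s → ℂ) (i : Fin s) : ℝ :=
  A i * B i - ‖CC i‖ ^ 2

noncomputable def otGram (A B : Fin s → ℝ) (CC : Fin s → ℂ) :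
    Matrix (Fin s ⊕ Fin s) (Fin s ⊕ Fin s) ℂ :=
  fromBlocks (diagonal fun i => (A i : ℂ)) (diagonal CC) (diagonal fun i => conj (CC i))
    (diagonal fun i => (B i : ℂ))

noncomputable def otGramInv (A B : Fin s → ℝ) (CC : Fin s → ℂ) :
    Matrix (Fin s ⊕ Fin s) (Fin s ⊕ Fin s) ℂ :=
  fromBlocks (diagonal fun i => B i / otDet A B CC i) (diagonal fun i => -CC i / otDet A B CC i)
    (diagonal fun i => -conj (CC i) / otDet A B CC i) (diagonal fun i => A i / otDet A B CC i)

theorem otGram_mul_otGramInv (hD : ∀ i, otDet A B CC i ≠ 0) :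
    otGram A B CC * otGramInv A B CC = 1 := by
  have hdet : ∀ i, (A i : ℂ) * B i - CC i * conj (CC i) = otDet A B CC i := fun i => by
    rw [otDet, mul_conj']; push_cast; rfl
  have := fromBlocks_diagonal_mul_eq_one (a := fun i => (A i : ℂ)) (b := CC)
    (c := fun i => conj (CC i)) (d := fun i => (B i : ℂ))
    fun i => hdet i ▸ ofReal_ne_zero.mpr (hD i)
  rw [otGram, otGramInv]
  simpa only [hdet] using this

theorem eq_otGramInv (hD : ∀ i, otDet A B CC i ≠ 0)
    {H : Matrix (Fin s ⊕ Fin s) (Fin s ⊕ Fin s) ℂ}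
    (hH : ∀ a b, ∑ c, otGram A B CC a c * H c b = if a = b then 1 else 0) :
    H = otGramInv A B CC :=
  (left_inv_eq_right_inv (mul_eq_one_comm.mp (otGram_mul_otGramInv hD))
    (Matrix.ext fun a b => by rw [mul_apply, hH, one_apply])).symm

theorem otGramInv_isHermitian : (otGramInv A B CC).IsHermitian := by
  refine IsHermitian.fromBlocks ?_ ?_ ?_ <;>
    simp [IsHermitian, diagonal_conjTranspose, Pi.star_def]

theorem otDet_pos {m : ℕ} {p : Fin m → Fin s} {C : Fin m → ℂ} (hA : ∀ i, 0 < A i)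
    (hB : ∀ i, 0 < B i) (hAB : ∀ t, 0 < A (p t) * B (p t) - ‖C t‖ ^ 2)
    (hCCp : ∀ t, CC (p t) = C t) (hCC0 : ∀ i, (∀ t, i ≠ p t) → CC i = 0) (i : Fin s) :
    0 < otDet A B CC i := by
  by_cases hi : ∃ t, i = p t
  · obtain ⟨t, rfl⟩ := hi
    rw [otDet, hCCp]
    exact hAB t
  · rw [otDet, hCC0 i fun t ht => hi ⟨t, ht⟩, norm_zero, sq, mul_zero, sub_zero]
    exact mul_pos (hA i) (hB i)

theorem IsOTMetric.gram (hω : IsOTMetric ω A B CC Z Zb W Wb) (a b : Fin s ⊕ Fin s) :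
    ω (Sum.elim Z W a) (Sum.elim Zb Wb b) = I * otGram A B CC a b := by
  rcases a with i | i <;> rcases b with j | j <;>
    simp [otGram, hω.Z_Zb, hω.W_Wb, hω.Z_Wb, hω.W_Zb, diagonal_apply, mul_ite]

theorem IsOTMetric.eq_otGram (hω : IsOTMetric ω A B CC Z Zb W Wb)
    {g : Matrix (Fin s ⊕ Fin s) (Fin s ⊕ Fin s) ℂ}
    (hg : ∀ a b, ω (Sum.elim Z W a) (Sum.elim Zb Wb b) = I * g a b) : g = otGram A B CC := by
  ext a b
  exact mul_left_cancel₀ I_ne_zero ((hg a b).symm.trans (hω.gram a b))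

theorem IsOTMetric.Zb_Z (hω : IsOTMetric ω A B CC Z Zb W Wb) (i j : Fin s) :
    ω (Zb i) (Z j) = if i = j then -(I * A i) else 0 := by
  rw [← hω.isAlt.neg, hω.Z_Zb]
  rcases eq_or_ne i j with rfl | h <;> simp [*, Ne.symm]

theorem IsOTMetric.Wb_W (hω : IsOTMetric ω A B CC Z Zb W Wb) (i j : Fin s) :
    ω (Wb i) (W j) = if i = j then -(I * B i) else 0 := by
  rw [← hω.isAlt.neg, hω.W_Wb]
  rcases eq_or_ne i j with rfl | h <;> simp [*, Ne.symm]

theorem IsOTMetric.Wb_Z (hω : IsOTMetric ω A B CC Z Zb W Wb) (i j : Fin s) :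
    ω (Wb i) (Z j) = if i = j then -(I * CC i) else 0 := by
  rw [← hω.isAlt.neg, hω.Z_Wb]
  rcases eq_or_ne i j with rfl | h <;> simp [*, Ne.symm]

theorem IsOTMetric.Zb_W (hω : IsOTMetric ω A B CC Z Zb W Wb) (i j : Fin s) :
    ω (Zb i) (W j) = if i = j then -(I * conj (CC i)) else 0 := by
  rw [← hω.isAlt.neg, hω.W_Zb]
  rcases eq_or_ne i j with rfl | h <;> simp [*, Ne.symm]

theorem IsOTFrame.lie_W_Zb (hF : IsOTFrame lam Z Zb W Wb) (i k : Fin s) :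
    ⁅W i, Zb k⁆ = (-lam k i) • W i := by
  rw [← lie_skew, hF.lie_Zb_W, neg_smul]

theorem IsOTFrame.lie_Wb_Zb (hF : IsOTFrame lam Z Zb W Wb) (i k : Fin s) :
    ⁅Wb i, Zb k⁆ = conj (lam k i) • Wb i := by
  rw [← lie_skew, hF.lie_Zb_Wb, neg_smul, neg_neg]

theorem J_lie_Z_Zb (hF : IsOTFrame lam Z Zb W Wb) (hT : IsTypeDecomposition 𝔤¹⁰ 𝔤⁰¹ p10 p01 J)
    (k l : Fin s) : J ⁅Z k, Zb l⁆ = if k = l then (1 / 2 : ℂ) • (Z k - Zb k) else 0 := by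
  rw [hF.lie_Z_Zb]
  split_ifs with h
  · rw [smul_add, hT.J_add (Submodule.smul_mem _ _ (mem_span_range_union_left Z W k))
      (Submodule.smul_mem _ _ (mem_span_range_union_left Zb Wb k)), smul_smul, smul_smul,
      ← smul_sub]
    congr 1
    linear_combination (-1 / 2 : ℂ) * I_sq
  · simpa using hT.J_add (Submodule.zero_mem _) (Submodule.zero_mem _)

theorem J_lie_Z_Wb (hF : IsOTFrame lam Z Zb W Wb) (hT : IsTypeDecomposition 𝔤¹⁰ 𝔤⁰¹ p10 p01 J)
    (k i : Fin s) : J ⁅Z k, Wb i⁆ = (-(I * conj (lam k i))) • Wb i := by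
  rw [hF.lie_Z_Wb, ← zero_add (conj (lam k i) • Wb i), hT.J_add (Submodule.zero_mem _)
    (Submodule.smul_mem _ _ (mem_span_range_union_right Zb Wb i))]
  module

theorem J_lie_W_Zb (hF : IsOTFrame lam Z Zb W Wb) (hT : IsTypeDecomposition 𝔤¹⁰ 𝔤⁰¹ p10 p01 J)
    (i k : Fin s) : J ⁅W i, Zb k⁆ = (-(I * lam k i)) • W i := by
  rw [hF.lie_W_Zb, ← add_zero (-lam k i • W i), hT.J_add
    (Submodule.smul_mem _ _ (mem_span_range_union_right Z W i)) (Submodule.zero_mem _)]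
  module

theorem J_lie_W_Wb (hF : IsOTFrame lam Z Zb W Wb) (hT : IsTypeDecomposition 𝔤¹⁰ 𝔤⁰¹ p10 p01 J)
    (i j : Fin s) : J ⁅W i, Wb j⁆ = 0 := by
  simpa [hF.lie_W_Wb] using hT.J_add (Submodule.zero_mem 𝔤¹⁰) (Submodule.zero_mem 𝔤⁰¹)

theorem ricciHol_Z (hF : IsOTFrame lam Z Zb W Wb) (hω : IsOTMetric ω A B CC Z Zb W Wb)
    (hD : ∀ i, otDet A B CC i ≠ 0) (i : Fin s) :
    ricciHol ω (otGramInv A B CC) (Sum.elim Z W) (Sum.elim Zb Wb) (Z i) = -I * ∑ k, lam i k := by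
  rw [ricciHol, sum_conj_mul_eq_I_mul_trace hω.gram (otGram_mul_otGramInv hD)
    otGramInv_isHermitian (diagonal (Sum.elim 0 fun k => -lam i k))]
  · simp [trace_diagonal, Fintype.sum_sum_type]
  · rintro (k | k) <;> simp [hF.lie_Z_Z, hF.lie_Z_W, diagonal_apply, ite_smul]

theorem ricciAntihol_Zb (hF : IsOTFrame lam Z Zb W Wb) (hω : IsOTMetric ω A B CC Z Zb W Wb)
    (hD : ∀ i, otDet A B CC i ≠ 0) (i : Fin s) :
    ricciAntihol ω (otGramInv A B CC) (Sum.elim Z W) (Sum.elim Zb Wb) (Zb i) =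
      I * ∑ k, conj (lam i k) := by
  rw [ricciAntihol, sum_mul_eq_neg_I_mul_trace hω.isAlt hω.gram
    (mul_eq_one_comm.mp (otGram_mul_otGramInv hD)) (diagonal (Sum.elim 0 fun k => -conj (lam i k)))]
  · simp [trace_diagonal, Fintype.sum_sum_type]
  · rintro (k | k) <;> simp [hF.lie_Zb_Zb, hF.lie_Zb_Wb, diagonal_apply, ite_smul]

theorem ricciAntihol_Wb (hF : IsOTFrame lam Z Zb W Wb) (hω : IsOTMetric ω A B CC Z Zb W Wb)
    (hD : ∀ i, otDet A B CC i ≠ 0) (j : Fin s) :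
    ricciAntihol ω (otGramInv A B CC) (Sum.elim Z W) (Sum.elim Zb Wb) (Wb j) = 0 := by
  rw [ricciAntihol, sum_mul_eq_neg_I_mul_trace hω.isAlt hω.gram
    (mul_eq_one_comm.mp (otGram_mul_otGramInv hD))
    (of fun c a => if c = .inr j then Sum.elim (fun k => conj (lam k j)) 0 a else 0)]
  · simp [trace]
  · rintro (k | k) <;> simp [hF.lie_Wb_Zb, hF.lie_Wb_Wb, ite_smul]

theorem ricciTorsion_eq (hF : IsOTFrame lam Z Zb W Wb)
    (hT : IsTypeDecomposition 𝔤¹⁰ 𝔤⁰¹ p10 p01 J) (v : L) :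
    ricciTorsion ω (otGramInv A B CC) (Sum.elim Z W) (Sum.elim Zb Wb) J v =
      ∑ k, ((B k : ℂ) / (2 * otDet A B CC k) * (ω v (Z k) - ω v (Zb k))
        + I * conj (CC k * lam k k) / otDet A B CC k * ω v (Wb k)
        + I * (CC k * lam k k) / otDet A B CC k * ω v (W k)) := by
  simp [ricciTorsion, Fintype.sum_sum_type, J_lie_Z_Zb hF hT, J_lie_Z_Wb hF hT, J_lie_W_Zb hF hT,
    J_lie_W_Wb hF hT, otGramInv, diagonal_apply, apply_ite, ite_mul]
  rw [← Finset.sum_neg_distrib, ← Finset.sum_add_distrib]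
  exact Finset.sum_congr rfl fun k _ => by ring

theorem bismutRicci_Z_Zb_self (hF : IsOTFrame lam Z Zb W Wb)
    (hlam : ∀ i k, (lam i k).im = if k = i then -1 / 4 else 0)
    (hω : IsOTMetric ω A B CC Z Zb W Wb) (hD : ∀ i, otDet A B CC i ≠ 0)
    (hT : IsTypeDecomposition 𝔤¹⁰ 𝔤⁰¹ p10 p01 J) (i : Fin s) :
    bismutRicci ω (otGramInv A B CC) (Sum.elim Z W) (Sum.elim Zb Wb) p10 p01 J (Z i) (Zb i) =
      -(3 * I / 4) * (1 + ((‖CC i‖ ^ 2 : ℝ) : ℂ) / otDet A B CC i) := by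
  have hconj : ∀ k, conj (lam i k) = lam i k + if k = i then I / 2 else 0 := by
    intro k
    by_cases h : k = i <;> apply Complex.ext <;> norm_num [h, hlam]
  have hlie : ⁅Z i, Zb i⁆ = (-(I / 2)) • Z i + (-(I / 2)) • Zb i := by
    rw [hF.lie_Z_Zb, if_pos rfl, smul_add]
  rw [bismutRicci_eq hT (Submodule.smul_mem _ _ (mem_span_range_union_left Z W i))
    (Submodule.smul_mem _ _ (mem_span_range_union_left Zb Wb i)) hlie, ricciHol_smul,
    ricciAntihol_smul, ricciHol_Z hF hω hD, ricciAntihol_Zb hF hω hD, ricciTorsion_eq hF hT]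
  -- without `-span_union` simp rewrites the spans and can no longer discharge `holo`, `antiholo`
  simp [hconj, hω.Z_Zb, hω.Zb_Z, hω.Z_Wb, hω.Zb_W, hω.holo, hω.antiholo,
    mem_span_range_union_left, mem_span_range_union_right, -Submodule.span_union,
    Finset.sum_add_distrib, mul_add, mul_neg, mul_ite, mul_zero]
  have hD' : (otDet A B CC i : ℂ) ≠ 0 := ofReal_ne_zero.mpr (hD i)
  have hδ : (otDet A B CC i : ℂ) = A i * B i - CC i * conj (CC i) := by
    rw [otDet, mul_conj']; push_cast; ring
  rw [← mul_conj']
  field_simp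
  rw [hδ]
  ring_nf
  rw [I_sq, I_pow_four]
  ring

theorem bismutRicci_Z_Wb (hF : IsOTFrame lam Z Zb W Wb) (hω : IsOTMetric ω A B CC Z Zb W Wb)
    (hD : ∀ i, otDet A B CC i ≠ 0) (hT : IsTypeDecomposition 𝔤¹⁰ 𝔤⁰¹ p10 p01 J) (i j : Fin s) :
    bismutRicci ω (otGramInv A B CC) (Sum.elim Z W) (Sum.elim Zb Wb) p10 p01 J (Z i) (Wb j) =
      I * conj (lam i j) * B j * CC j * (lam j j - I / 2) / otDet A B CC j := by
  have hlie : ⁅Z i, Wb j⁆ = 0 + conj (lam i j) • Wb j := by rw [hF.lie_Z_Wb, zero_add]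
  rw [bismutRicci_eq hT (Submodule.zero_mem _)
    (Submodule.smul_mem _ _ (mem_span_range_union_right Zb Wb j)) hlie, ricciAntihol_smul,
    ricciAntihol_Wb hF hω hD, ricciTorsion_eq hF hT]
  simp [ricciHol, hω.Wb_Z, hω.Wb_W, hω.antiholo, mem_span_range_union_left,
    mem_span_range_union_right, -Submodule.span_union, Finset.sum_add_distrib,
    mul_add, mul_neg, mul_ite, mul_zero]
  ring_nf
  rw [I_sq, I_pow_three]
  ring

theorem bismutRicci_Z_Wb_self (hF : IsOTFrame lam Z Zb W Wb) (hω : IsOTMetric ω A B CC Z Zb W Wb)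
    (hD : ∀ i, otDet A B CC i ≠ 0) (hT : IsTypeDecomposition 𝔤¹⁰ 𝔤⁰¹ p10 p01 J) {j : Fin s} {c : ℝ}
    (hc : lam j j = -(c : ℂ) / 2 - I / 4) :
    bismutRicci ω (otGramInv A B CC) (Sum.elim Z W) (Sum.elim Zb Wb) p10 p01 J (Z j) (Wb j) =
      -I * (-(3 / 16) - (c : ℂ) ^ 2 / 4 - I * c / 4) * B j * CC j / otDet A B CC j := by
  rw [bismutRicci_Z_Wb hF hω hD hT, hc]
  simp only [map_sub, map_div₀, map_neg, conj_ofReal, conj_I, map_ofNat]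
  ring_nf
  rw [I_sq, I_pow_three]
  ring

end OT

theorem stmt_12_general
    (s : ℕ)
    (cmat : Fin s → Fin s → ℝ) (lam : Fin s → Fin s → ℂ)
    (hlamdef : ∀ k i, lam k i =
      if i = k then -(cmat k k : ℂ) / 2 - I / 4 else (-(cmat k i : ℂ) / 2))
    (L : Type*) [LieRing L] [LieAlgebra ℂ L]
    (bas : Module.Basis ((Fin s ⊕ Fin s) ⊕ (Fin s ⊕ Fin s)) ℂ L)
    (Z Zb W Wb : Fin s → L)
    (hZ : ∀ k, Z k = bas (Sum.inl (Sum.inl k)))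
    (hZb : ∀ k, Zb k = bas (Sum.inl (Sum.inr k)))
    (hW : ∀ i, W i = bas (Sum.inr (Sum.inl i)))
    (hWb : ∀ i, Wb i = bas (Sum.inr (Sum.inr i)))
    (hZZb : ∀ k l, ⁅Z k, Zb l⁆ = if k = l then (-(I / 2)) • (Z k + Zb k) else 0)
    (hZZ : ∀ k l, ⁅Z k, Z l⁆ = 0)
    (hZbZb : ∀ k l, ⁅Zb k, Zb l⁆ = 0)
    (hZW : ∀ k i, ⁅Z k, W i⁆ = (-(lam k i)) • W i)
    (hZbWb : ∀ k i, ⁅Zb k, Wb i⁆ = (-(starRingEnd ℂ (lam k i))) • Wb i)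
    (hZWb : ∀ k i, ⁅Z k, Wb i⁆ = (starRingEnd ℂ (lam k i)) • Wb i)
    (hZbW : ∀ k i, ⁅Zb k, W i⁆ = (lam k i) • W i)
    (hWbWb : ∀ i j, ⁅Wb i, Wb j⁆ = 0)
    (hWWb : ∀ i j, ⁅W i, Wb j⁆ = 0)
    -- the distinguished indices `p_1, …, p_m`
    (m : ℕ) (p : Fin m → Fin s) (hpinj : Function.Injective p)
    (hpj : ∀ (t : Fin m) (j : Fin s), j ≠ p t → lam j (p t) = 0)
    -- the coefficients of the metric
    (A B : Fin s → ℝ) (C : Fin m → ℂ)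
    (hA : ∀ i, 0 < A i) (hB : ∀ i, 0 < B i)
    (hAB : ∀ t, 0 < A (p t) * B (p t) - ‖C t‖ ^ 2)
    -- the (1,0)- and (0,1)-projections
    (p10 p01 : L → L)
    (hp : ∀ v : L, p10 v ∈ Submodule.span ℂ (Set.range Z ∪ Set.range W) ∧
      p01 v ∈ Submodule.span ℂ (Set.range Zb ∪ Set.range Wb) ∧ p10 v + p01 v = v)
    -- the complex structure `J`
    (Jmap : L → L) (hJmap : ∀ v, Jmap v = I • p10 v - I • p01 v)
    -- the left-invariant pluriclosed Hermitian metric `ω`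
    (ω : L →ₗ[ℂ] L →ₗ[ℂ] ℂ)
    (hωalt : ∀ x : L, ω x x = 0)
    (hω10 : ∀ x ∈ Submodule.span ℂ (Set.range Z ∪ Set.range W),
      ∀ y ∈ Submodule.span ℂ (Set.range Z ∪ Set.range W), ω x y = 0)
    (hω01 : ∀ x ∈ Submodule.span ℂ (Set.range Zb ∪ Set.range Wb),
      ∀ y ∈ Submodule.span ℂ (Set.range Zb ∪ Set.range Wb), ω x y = 0)
    (hωZZ : ∀ i j, ω (Z i) (Zb j) = if i = j then I * (A i : ℂ) else 0)
    (hωWW : ∀ i j, ω (W i) (Wb j) = if i = j then I * (B i : ℂ) else 0)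
    (hωZWb0 : ∀ i j, (¬ ∃ t, i = p t ∧ j = p t) → ω (Z i) (Wb j) = 0)
    (hωZWbC : ∀ t, ω (Z (p t)) (Wb (p t)) = I * C t)
    (hωWZb0 : ∀ i j, (¬ ∃ t, i = p t ∧ j = p t) → ω (W i) (Zb j) = 0)
    (hωWZbC : ∀ t, ω (W (p t)) (Zb (p t)) = I * starRingEnd ℂ (C t))
    -- the frame `{X_1,…,X_{2s}} = {Z_1,…,Z_s,W_1,…,W_s}` and its conjugate
    (Xf Xb : Fin s ⊕ Fin s → L)
    (hXfZ : ∀ k : Fin s, Xf (Sum.inl k) = Z k)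
    (hXfW : ∀ i : Fin s, Xf (Sum.inr i) = W i)
    (hXbZ : ∀ k : Fin s, Xb (Sum.inl k) = Zb k)
    (hXbW : ∀ i : Fin s, Xb (Sum.inr i) = Wb i)
    -- the matrix `g_{a b̄}` of the metric and its inverse `(g^{b̄ a})`
    (g ginv : Fin s ⊕ Fin s → Fin s ⊕ Fin s → ℂ)
    (hg : ∀ a b, ω (Xf a) (Xb b) = I * g a b)
    (hinv : ∀ a b, ∑ cc, g a cc * ginv cc b = if a = b then 1 else 0)
    -- the Bismut-Ricci form
    (ρB : L → L → ℂ)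
    (hρ : ∀ X Y : L, ρB X Y =
      -(∑ a, ∑ b, (starRingEnd ℂ (ginv a b) * ω ⁅p10 ⁅X, Y⁆, Xf a⁆ (Xb b)
          + ginv a b * ω ⁅p01 ⁅X, Y⁆, Xb a⁆ (Xf b)))
      + I * ∑ a, ∑ b, starRingEnd ℂ (ginv a b) * ω ⁅X, Y⁆ (Jmap ⁅Xf a, Xb b⁆))
    :
    (∀ i j, i ≠ j → ρB (Z i) (Zb j) = 0) ∧
    (∀ t : Fin m, ρB (Z (p t)) (Zb (p t)) =
      -(3 * I / 4) * (1 + ((‖C t‖ ^ 2 : ℝ) : ℂ) /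
        ((A (p t) * B (p t) - ‖C t‖ ^ 2 : ℝ) : ℂ))) ∧
    (∀ i, (∀ t : Fin m, i ≠ p t) → ρB (Z i) (Zb i) = -(3 * I / 4)) ∧
    (∀ i j, ρB (W i) (Wb j) = 0) ∧
    (∀ i j, (¬ ∃ t, i = p t ∧ j = p t) → ρB (Z i) (Wb j) = 0) ∧
    (∀ t : Fin m, ρB (Z (p t)) (Wb (p t)) =
      -I * (-(3 / 16) - (cmat (p t) (p t) : ℂ) ^ 2 / 4 - I * (cmat (p t) (p t) : ℂ) / 4) *
        (B (p t) : ℂ) * C t /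
        ((A (p t) * B (p t) - ‖C t‖ ^ 2 : ℝ) : ℂ)) := by
  obtain ⟨CC, hCCp, hCC0⟩ := hpinj.exists_eq_and_eq_zero_off_range C
  have hF : IsOTFrame lam Z Zb W Wb := ⟨hZZb, hZZ, hZbZb, hZW, hZbWb, hZWb, hZbW, hWbWb, hWWb⟩
  have hω : IsOTMetric ω A B CC Z Zb W Wb := ⟨hωalt, hω10, hω01, hωZZ, hωWW,
    eq_ite_of_eq_zero_off_range p (fun i => I * CC i) hωZWb0 (fun t => by simp only [hωZWbC, hCCp])
      fun i hi => by simp only [hCC0 i hi, mul_zero],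
    eq_ite_of_eq_zero_off_range p (fun i => I * conj (CC i)) hωWZb0
      (fun t => by simp only [hωWZbC, hCCp])
      fun i hi => by simp only [hCC0 i hi, map_zero, mul_zero]⟩
  have hD i := (otDet_pos hA hB hAB hCCp hCC0 i).ne'
  have hT : IsTypeDecomposition _ _ p10 p01 Jmap := ⟨fun x hx y hy =>
    proj_add_eq_of_disjoint (bas.disjoint_span_range_union hZ hZb hW hWb) hp hx hy, hJmap⟩
  have hlam i k : (lam i k).im = if k = i then -1 / 4 else 0 := by
    rw [hlamdef]; split_ifs <;> norm_num
  obtain rfl : Xf = Sum.elim Z W := funext fun a => a.rec hXfZ hXfW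
  obtain rfl : Xb = Sum.elim Zb Wb := funext fun a => a.rec hXbZ hXbW
  obtain rfl := hω.eq_otGram hg
  obtain rfl := eq_otGramInv hD hinv
  obtain rfl : ρB = bismutRicci ω _ _ _ p10 p01 Jmap := funext fun X => funext (hρ X)
  refine ⟨fun i j hij => bismutRicci_eq_zero hT (by rw [hZZb, if_neg hij]), fun t => ?_,
    fun i hi => ?_, fun i j => bismutRicci_eq_zero hT (hWWb i j), fun i j hij => ?_, fun t => ?_⟩
  · simpa [otDet, hCCp] using bismutRicci_Z_Zb_self hF hlam hω hD hT (p t)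
  · simpa [otDet, hCC0 i hi] using bismutRicci_Z_Zb_self hF hlam hω hD hT i
  · rw [bismutRicci_Z_Wb hF hω hD hT]
    rcases em (∃ t, j = p t) with ⟨t, rfl⟩ | hj
    · simp [hpj t i fun h => hij ⟨t, h, rfl⟩]
    · simp [hCC0 j fun t ht => hj ⟨t, ht⟩]
  · simpa [otDet, hCCp] using
      bismutRicci_Z_Wb_self hF hω hD hT (by rw [hlamdef, if_pos rfl] : lam (p t) (p t) = _)

/-- For the general left-invariant pluriclosed Hermitian metric `ω` on an
Oeljeklaus-Toma manifold of type `(s,s)`, the (1,1)-part of the Bismut-Ricci form is: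
`ρ_B(Z_i, Z̄_j) = 0` for `i ≠ j`;
`ρ_B(Z_{p_t}, Z̄_{p_t}) = −(3√−1/4)(1 + |C_t|²/(A_{p_t}B_{p_t} − |C_t|²))`;
`ρ_B(Z_i, Z̄_i) = −3√−1/4` for `i ∉ {p_1,…,p_m}`; `ρ_B(W_i, W̄_j) = 0`;
`ρ_B(Z_i, W̄_j) = 0` unless `i = j = p_t`; and
`ρ_B(Z_{p_t}, W̄_{p_t}) = −√−1·(−3/16 − c²/4 − √−1·c/4)·B_{p_t}C_t/(A_{p_t}B_{p_t} − |C_t|²)`. -/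
theorem stmt_12
    (s : ℕ) (hs : 0 < s)
    (cmat : Fin s → Fin s → ℝ) (lam : Fin s → Fin s → ℂ)
    (hlamdef : ∀ k i, lam k i =
      if i = k then -(cmat k k : ℂ) / 2 - I / 4 else (-(cmat k i : ℂ) / 2))
    (L : Type*) [LieRing L] [LieAlgebra ℂ L]
    (bas : Module.Basis ((Fin s ⊕ Fin s) ⊕ (Fin s ⊕ Fin s)) ℂ L)
    (Z Zb W Wb : Fin s → L)
    (hZ : ∀ k, Z k = bas (Sum.inl (Sum.inl k)))
    (hZb : ∀ k, Zb k = bas (Sum.inl (Sum.inr k)))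
    (hW : ∀ i, W i = bas (Sum.inr (Sum.inl i)))
    (hWb : ∀ i, Wb i = bas (Sum.inr (Sum.inr i)))
    (hZZb : ∀ k l, ⁅Z k, Zb l⁆ = if k = l then (-(I / 2)) • (Z k + Zb k) else 0)
    (hZZ : ∀ k l, ⁅Z k, Z l⁆ = 0)
    (hZbZb : ∀ k l, ⁅Zb k, Zb l⁆ = 0)
    (hZW : ∀ k i, ⁅Z k, W i⁆ = (-(lam k i)) • W i)
    (hZbWb : ∀ k i, ⁅Zb k, Wb i⁆ = (-(starRingEnd ℂ (lam k i))) • Wb i)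
    (hZWb : ∀ k i, ⁅Z k, Wb i⁆ = (starRingEnd ℂ (lam k i)) • Wb i)
    (hZbW : ∀ k i, ⁅Zb k, W i⁆ = (lam k i) • W i)
    (hWW : ∀ i j, ⁅W i, W j⁆ = 0)
    (hWbWb : ∀ i j, ⁅Wb i, Wb j⁆ = 0)
    (hWWb : ∀ i j, ⁅W i, Wb j⁆ = 0)
    -- the distinguished indices `p_1, …, p_m`
    (m : ℕ) (p : Fin m → Fin s) (hpinj : Function.Injective p)
    (hpj : ∀ (t : Fin m) (j : Fin s), j ≠ p t → lam j (p t) = 0)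
    -- the coefficients of the metric
    (A B : Fin s → ℝ) (C : Fin m → ℂ)
    (hA : ∀ i, 0 < A i) (hB : ∀ i, 0 < B i)
    (hAB : ∀ t, 0 < A (p t) * B (p t) - ‖C t‖ ^ 2)
    -- the (1,0)- and (0,1)-projections
    (p10 p01 : L → L)
    (hp : ∀ v : L, p10 v ∈ Submodule.span ℂ (Set.range Z ∪ Set.range W) ∧
      p01 v ∈ Submodule.span ℂ (Set.range Zb ∪ Set.range Wb) ∧ p10 v + p01 v = v)
    -- the complex structure `J`
    (Jmap : L → L) (hJmap : ∀ v, Jmap v = I • p10 v - I • p01 v)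
    -- the left-invariant pluriclosed Hermitian metric `ω`
    (ω : L →ₗ[ℂ] L →ₗ[ℂ] ℂ)
    (hωalt : ∀ x : L, ω x x = 0)
    (hω10 : ∀ x ∈ Submodule.span ℂ (Set.range Z ∪ Set.range W),
      ∀ y ∈ Submodule.span ℂ (Set.range Z ∪ Set.range W), ω x y = 0)
    (hω01 : ∀ x ∈ Submodule.span ℂ (Set.range Zb ∪ Set.range Wb),
      ∀ y ∈ Submodule.span ℂ (Set.range Zb ∪ Set.range Wb), ω x y = 0)
    (hωZZ : ∀ i j, ω (Z i) (Zb j) = if i = j then I * (A i : ℂ) else 0)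
    (hωWW : ∀ i j, ω (W i) (Wb j) = if i = j then I * (B i : ℂ) else 0)
    (hωZWb0 : ∀ i j, (¬ ∃ t, i = p t ∧ j = p t) → ω (Z i) (Wb j) = 0)
    (hωZWbC : ∀ t, ω (Z (p t)) (Wb (p t)) = I * C t)
    (hωWZb0 : ∀ i j, (¬ ∃ t, i = p t ∧ j = p t) → ω (W i) (Zb j) = 0)
    (hωWZbC : ∀ t, ω (W (p t)) (Zb (p t)) = I * starRingEnd ℂ (C t))
    -- the frame `{X_1,…,X_{2s}} = {Z_1,…,Z_s,W_1,…,W_s}` and its conjugate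
    (Xf Xb : Fin s ⊕ Fin s → L)
    (hXfZ : ∀ k : Fin s, Xf (Sum.inl k) = Z k)
    (hXfW : ∀ i : Fin s, Xf (Sum.inr i) = W i)
    (hXbZ : ∀ k : Fin s, Xb (Sum.inl k) = Zb k)
    (hXbW : ∀ i : Fin s, Xb (Sum.inr i) = Wb i)
    -- the matrix `g_{a b̄}` of the metric and its inverse `(g^{b̄ a})`
    (g ginv : Fin s ⊕ Fin s → Fin s ⊕ Fin s → ℂ)
    (hg : ∀ a b, ω (Xf a) (Xb b) = I * g a b)
    (hinv : ∀ a b, ∑ cc, g a cc * ginv cc b = if a = b then 1 else 0)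
    -- the Bismut-Ricci form
    (ρB : L → L → ℂ)
    (hρ : ∀ X Y : L, ρB X Y =
      -(∑ a, ∑ b, (starRingEnd ℂ (ginv a b) * ω ⁅p10 ⁅X, Y⁆, Xf a⁆ (Xb b)
          + ginv a b * ω ⁅p01 ⁅X, Y⁆, Xb a⁆ (Xf b)))
      + I * ∑ a, ∑ b, starRingEnd ℂ (ginv a b) * ω ⁅X, Y⁆ (Jmap ⁅Xf a, Xb b⁆))
    :
    (∀ i j, i ≠ j → ρB (Z i) (Zb j) = 0) ∧
    (∀ t : Fin m, ρB (Z (p t)) (Zb (p t)) =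
      -(3 * I / 4) * (1 + ((‖C t‖ ^ 2 : ℝ) : ℂ) /
        ((A (p t) * B (p t) - ‖C t‖ ^ 2 : ℝ) : ℂ))) ∧
    (∀ i, (∀ t : Fin m, i ≠ p t) → ρB (Z i) (Zb i) = -(3 * I / 4)) ∧
    (∀ i j, ρB (W i) (Wb j) = 0) ∧
    (∀ i j, (¬ ∃ t, i = p t ∧ j = p t) → ρB (Z i) (Wb j) = 0) ∧
    (∀ t : Fin m, ρB (Z (p t)) (Wb (p t)) =
      -I * (-(3 / 16) - (cmat (p t) (p t) : ℂ) ^ 2 / 4 - I * (cmat (p t) (p t) : ℂ) / 4) *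
        (B (p t) : ℂ) * C t /
        ((A (p t) * B (p t) - ‖C t‖ ^ 2 : ℝ) : ℂ)) :=
  stmt_12_general s cmat lam hlamdef L bas Z Zb W Wb hZ hZb hW hWb hZZb hZZ hZbZb hZW hZbWb hZWb
    hZbW hWbWb hWWb m p hpinj hpj A B C hA hB hAB p10 p01 hp Jmap hJmap ω hωalt hω10 hω01 hωZZ hωWW
    hωZWb0 hωZWbC hωWZb0 hωWZbC Xf Xb hXfZ hXfW hXbZ hXbW g ginv hg hinv ρB hρ
end
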